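/- arXiv:1812.07679 — 11 statements merged into one kernel-verified Lean document; each statement's English description precedes it below -/
import Mathlib

section
/- Let D1 = diag(λ1, μ1) and D2 = diag(λ2, μ2) be 2×2 real diagonal matrices with λ1 ≥ μ1 and λ2 ≥ μ2. Then for any unitary matrix U ∈ SU(2), tr(D1 U D2 U*) ≤ tr(D1 D2). -/
open Matrix

/-- Rearrangement inequality for 2×2 matrices: for diagonal real matrices
`D1 = diag(λ1, μ1)`, `D2 = diag(λ2, μ2)` with `λ1 ≥ μ1`, `λ2 ≥ μ2`, and any
`U ∈ SU(2)`, one has `tr(D1 U D2 U*) ≤ tr(D1 D2)`. -/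
theorem trace_conj_le_trace_of_diag
    (l1 m1 l2 m2 : ℝ) (h1 : m1 ≤ l1) (h2 : m2 ≤ l2)
    (U : Matrix.specialUnitaryGroup (Fin 2) ℂ)
    (D1 D2 : Matrix (Fin 2) (Fin 2) ℂ)
    (hD1 : D1 = Matrix.diagonal ![(l1 : ℂ), (m1 : ℂ)])
    (hD2 : D2 = Matrix.diagonal ![(l2 : ℂ), (m2 : ℂ)]) :
    (Matrix.trace (D1 * (U : Matrix (Fin 2) (Fin 2) ℂ) * D2 *
      (U : Matrix (Fin 2) (Fin 2) ℂ)ᴴ)).re ≤ (Matrix.trace (D1 * D2)).re := by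
  subst hD1 hD2
  have hmem := U.2.1
  simp only [SetLike.mem_coe, Matrix.mem_unitaryGroup_iff] at hmem
  have hmem' := U.2.1
  simp only [SetLike.mem_coe, Matrix.mem_unitaryGroup_iff'] at hmem'
  set M := (U : Matrix (Fin 2) (Fin 2) ℂ) with hM
  set a := M 0 0; set b := M 0 1; set c := M 1 0; set d := M 1 1
  have h00 : a * star a + b * star b = 1 := by
    have := congrFun (congrFun hmem 0) 0
    simpa [Matrix.mul_apply, Fin.sum_univ_two, Matrix.one_apply] using this
  have h11 : c * star c + d * star d = 1 := by
    have := congrFun (congrFun hmem 1) 1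
    simpa [Matrix.mul_apply, Fin.sum_univ_two, Matrix.one_apply] using this
  have h00' : star a * a + star c * c = 1 := by
    have := congrFun (congrFun hmem' 0) 0
    simpa [Matrix.mul_apply, Fin.sum_univ_two, Matrix.one_apply] using this
  have A1 : Complex.normSq a + Complex.normSq b = 1 := by
    have := congrArg Complex.re h00
    simpa [Complex.mul_conj] using this
  have A2 : Complex.normSq c + Complex.normSq d = 1 := by
    have := congrArg Complex.re h11
    simpa [Complex.mul_conj] using this
  have A3 : Complex.normSq a + Complex.normSq c = 1 := by
    have := congrArg Complex.re h00'
    simpa [mul_comm, Complex.mul_conj] using this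
  have hA0 : 0 ≤ Complex.normSq a := Complex.normSq_nonneg a
  have hB0 : 0 ≤ Complex.normSq b := Complex.normSq_nonneg b
  have goal_eq : (Matrix.trace (Matrix.diagonal ![(l1:ℂ), m1] * M *
      Matrix.diagonal ![(l2:ℂ), m2] * Mᴴ)).re
      = l1 * l2 * Complex.normSq a + l1 * m2 * Complex.normSq b
        + m1 * l2 * Complex.normSq c + m1 * m2 * Complex.normSq d := by
    simp [Matrix.trace_fin_two, Matrix.mul_apply, Fin.sum_univ_two,
      Matrix.diagonal, Matrix.conjTranspose_apply, Complex.normSq_apply]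
    ring
  have goal_eq2 : (Matrix.trace (Matrix.diagonal ![(l1:ℂ), m1] *
      Matrix.diagonal ![(l2:ℂ), m2])).re = l1 * l2 + m1 * m2 := by
    simp [Matrix.trace_fin_two, Matrix.mul_apply, Fin.sum_univ_two, Matrix.diagonal]
  have hD : Complex.normSq d = Complex.normSq a := by linarith
  have hC : Complex.normSq c = 1 - Complex.normSq a := by linarith
  have hB : Complex.normSq b = 1 - Complex.normSq a := by linarith
  rw [goal_eq, goal_eq2, hD, hC, hB]
  nlinarith [mul_nonneg (mul_nonneg (sub_nonneg.2 h1) (sub_nonneg.2 h2))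
    (by linarith : (0:ℝ) ≤ 1 - Complex.normSq a)]
end

section
/- Let D1 = diag(λ1, μ1) and D2 = diag(λ2, μ2) with λ1 > μ1 and λ2 > μ2, and let U ∈ SU(2). Then tr(D1 U D2 U*) = tr(D1 D2) if and only if U is diagonal. -/
open Matrix

/-- Equality case of the matrix rearrangement inequality: for `D1 = diag(λ1, μ1)`,
`D2 = diag(λ2, μ2)` with `λ1 > μ1`, `λ2 > μ2`, and `U ∈ SU(2)`,
`tr(D1 U D2 U*) = tr(D1 D2)` if and only if `U` is diagonal. -/
theorem trace_conj_eq_trace_iff_isDiag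
    (l1 m1 l2 m2 : ℝ) (h1 : m1 < l1) (h2 : m2 < l2)
    (U : Matrix.specialUnitaryGroup (Fin 2) ℂ)
    (D1 D2 : Matrix (Fin 2) (Fin 2) ℂ)
    (hD1 : D1 = Matrix.diagonal ![(l1 : ℂ), (m1 : ℂ)])
    (hD2 : D2 = Matrix.diagonal ![(l2 : ℂ), (m2 : ℂ)]) :
    Matrix.trace (D1 * (U : Matrix (Fin 2) (Fin 2) ℂ) * D2 *
      (U : Matrix (Fin 2) (Fin 2) ℂ)ᴴ) = Matrix.trace (D1 * D2) ↔
    (U : Matrix (Fin 2) (Fin 2) ℂ).IsDiag := by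
  set M : Matrix (Fin 2) (Fin 2) ℂ := (U : Matrix (Fin 2) (Fin 2) ℂ) with hM
  have hmem : M ∈ Matrix.unitaryGroup (Fin 2) ℂ :=
    ((Matrix.mem_specialUnitaryGroup_iff).mp U.2).1
  have hU1 : M * Mᴴ = 1 := (Matrix.mem_unitaryGroup_iff).mp hmem
  have hU2 : Mᴴ * M = 1 := (Matrix.mem_unitaryGroup_iff').mp hmem
  set a := M 0 0; set b := M 0 1; set c := M 1 0; set d := M 1 1
  have e1 : a * starRingEnd ℂ a + b * starRingEnd ℂ b = 1 := by
    have := congrFun (congrFun hU1 0) 0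
    simpa [Matrix.mul_apply, Fin.sum_univ_two, Matrix.conjTranspose_apply] using this
  have e2 : c * starRingEnd ℂ c + d * starRingEnd ℂ d = 1 := by
    have := congrFun (congrFun hU1 1) 1
    simpa [Matrix.mul_apply, Fin.sum_univ_two, Matrix.conjTranspose_apply] using this
  have e3 : starRingEnd ℂ a * a + starRingEnd ℂ c * c = 1 := by
    have := congrFun (congrFun hU2 0) 0
    simpa [Matrix.mul_apply, Fin.sum_univ_two, Matrix.conjTranspose_apply] using this
  have hbc : b * starRingEnd ℂ b = c * starRingEnd ℂ c := by
    have : a * starRingEnd ℂ a + b * starRingEnd ℂ b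
        = starRingEnd ℂ a * a + starRingEnd ℂ c * c := by rw [e1, e3]
    rw [mul_comm (starRingEnd ℂ a) a, mul_comm (starRingEnd ℂ c) c] at this
    linear_combination this
  have key : Matrix.trace (D1 * M * D2 * Mᴴ) - Matrix.trace (D1 * D2)
      = -((l1 : ℂ) - m1) * ((l2 : ℂ) - m2) * (b * starRingEnd ℂ b) := by
    subst hD1 hD2
    simp only [Matrix.trace_fin_two, Matrix.mul_apply, Fin.sum_univ_two,
      Matrix.conjTranspose_apply, Matrix.diagonal_apply, Matrix.cons_val_zero,
      Matrix.cons_val_one, Matrix.head_cons]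
    simp only [← starRingEnd_apply]
    simp only [if_true, if_neg (by decide : ¬(0 : Fin 2) = 1),
      if_neg (by decide : ¬(1 : Fin 2) = 0)]
    have hd : d * starRingEnd ℂ d = 1 - b * starRingEnd ℂ b := by
      rw [hbc]; linear_combination e2
    have ha : a * starRingEnd ℂ a = 1 - b * starRingEnd ℂ b := by linear_combination e1
    ring_nf
    ring_nf at ha hd hbc
    linear_combination ((l1:ℂ)*l2) * ha + ((m1:ℂ)*m2) * hd + ((m1:ℂ)*l2) * hbc.symm
  constructor
  · intro heq
    have hb2 : b * starRingEnd ℂ b = 0 := by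
      have h0 : -((l1 : ℂ) - m1) * ((l2 : ℂ) - m2) * (b * starRingEnd ℂ b) = 0 := by
        rw [← key, heq, sub_self]
      have hne : -((l1 : ℂ) - m1) * ((l2 : ℂ) - m2) ≠ 0 := by
        apply mul_ne_zero
        · simp only [neg_ne_zero, sub_ne_zero]
          exact_mod_cast h1.ne'
        · rw [sub_ne_zero]
          exact_mod_cast h2.ne'
      exact (mul_eq_zero.mp h0).resolve_left hne
    have hb : b = 0 := by
      rcases mul_eq_zero.mp hb2 with h | h
      · exact h
      · simpa using congrArg (starRingEnd ℂ) h
    have hc : c = 0 := by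
      have hc2 : c * starRingEnd ℂ c = 0 := by rw [← hbc, hb2]
      rcases mul_eq_zero.mp hc2 with h | h
      · exact h
      · simpa using congrArg (starRingEnd ℂ) h
    intro i j hij
    fin_cases i <;> fin_cases j <;>
      first | exact absurd rfl hij | exact hb | exact hc
  · intro hdiag
    have hb : b = 0 := hdiag (by decide : (0 : Fin 2) ≠ 1)
    have : Matrix.trace (D1 * M * D2 * Mᴴ) - Matrix.trace (D1 * D2) = 0 := by
      rw [key, hb]; ring
    exact sub_eq_zero.mp this
end

section
/- Let 1 < p < 2, 1 < q < 3 with p < q, and λ ≥ 0. Define f_λ(x) = x^q + (1−x)^q − λ(x^p + (1−x)^p) on [0, 1/2]. Set λ_c = (1 − 2^{1−q})/(1 − 2^{1−p}). Then if λ > λ_c the minimum of f_λ on [0,1/2] is attained only at x = 0, and if λ < λ_c the minimum is attained only at x = 1/2. -/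
/-!
Write `h_x(r) = 1 - x^r - (1-x)^r`. Then `f_λ(x) - f_λ(0) = λ h_x(p) - h_x(q)`,
`f_λ(x) - f_λ(1/2) = (h_{1/2}(q) - h_x(q)) - λ (h_{1/2}(p) - h_x(p))` and
`λ_c = h_{1/2}(q) / h_{1/2}(p)`, so both claims reduce to
`h_x(q) h_{1/2}(p) ≤ h_{1/2}(q) h_x(p)`.

For `Φ = h_x - c h_{1/2}`, `2^r Φ'(r)` is a positive combination of `(2x)^r` and `(2(1-x))^r`
plus a constant, hence strictly convex, so `Φ` cannot go down, up and down again along four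
increasing points. The ratio `h_x / h_{1/2}` equals `4x(1-x)` both at `r = 2` and at `r = 3`;
applying this with `c = 4x(1-x)` at `1 < p < 2 < 3` gives `h_x(p) > 4x(1-x) h_{1/2}(p)`, and then
with `c = h_x(p) / h_{1/2}(p)` at `1 < p < q < 3` gives the inequality.
-/

open Real Set

noncomputable def powDefect (x r : ℝ) : ℝ := 1 - x ^ r - (1 - x) ^ r

lemma powDefect_half (r : ℝ) : powDefect (1 / 2) r = 1 - 2 ^ (1 - r) := by
  rw [powDefect, sub_sub, show (1 : ℝ) - 1 / 2 = 2⁻¹ by norm_num, one_div, ← two_mul,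
    inv_rpow zero_le_two, ← rpow_neg zero_le_two, rpow_sub two_pos, rpow_one, rpow_neg zero_le_two,
    div_eq_mul_inv]

lemma powDefect_zero {r : ℝ} (hr : r ≠ 0) : powDefect 0 r = 0 := by
  simp [powDefect, zero_rpow hr]

lemma powDefect_one (x : ℝ) : powDefect x 1 = 0 := by
  simp [powDefect]

lemma powDefect_two (x : ℝ) : powDefect x 2 = 2 * x * (1 - x) := by
  rw [powDefect, rpow_two, rpow_two]; ring

lemma powDefect_three (x : ℝ) : powDefect x 3 = 3 * x * (1 - x) := by
  rw [powDefect, show (3 : ℝ) = (3 : ℕ) by norm_num, rpow_natCast, rpow_natCast]; ring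

lemma powDefect_pos {x r : ℝ} (hx₀ : 0 < x) (hx₁ : x < 1) (hr : 1 < r) : 0 < powDefect x r := by
  have h₁ : x ^ r < x := by
    simpa using rpow_lt_rpow_of_exponent_gt hx₀ hx₁ hr
  have h₂ : (1 - x) ^ r < 1 - x := by
    simpa using rpow_lt_rpow_of_exponent_gt (sub_pos.2 hx₁) (by linarith) hr
  rw [powDefect]; linarith

lemma powDefect_lt_powDefect_half {x r : ℝ} (hx₀ : 0 ≤ x) (hx₁ : x ≤ 1) (hx : x ≠ 1 / 2)
    (hr : 1 < r) : powDefect x r < powDefect (1 / 2) r := by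
  have h := (strictConvexOn_rpow hr).2 (mem_Ici.2 hx₀) (mem_Ici.2 (sub_nonneg.2 hx₁))
    (by contrapose! hx; linarith) one_half_pos one_half_pos (add_halves 1)
  simp only [smul_eq_mul, show 1 / 2 * x + 1 / 2 * (1 - x) = (1 / 2 : ℝ) by ring] at h
  rw [powDefect, powDefect, show (1 : ℝ) - 1 / 2 = 1 / 2 by norm_num]
  linarith

lemma hasDerivAt_powDefect {x : ℝ} (hx₀ : 0 < x) (hx₁ : x < 1) (r : ℝ) :
    HasDerivAt (powDefect x) (-(x ^ r * log x) - (1 - x) ^ r * log (1 - x)) r :=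
  (((hasStrictDerivAt_const_rpow hx₀ r).hasDerivAt.const_sub 1).sub
    (hasStrictDerivAt_const_rpow (sub_pos.2 hx₁) r).hasDerivAt)

lemma strictConvexOn_const_mul_rpow {b k : ℝ} (hb₀ : 0 < b) (hb₁ : b ≠ 1) (hk : 0 < k) :
    StrictConvexOn ℝ univ (fun r : ℝ => k * b ^ r) := by
  refine ⟨convex_univ, fun r _ s _ hrs α β hα hβ hαβ => ?_⟩
  have hlog : log b ≠ 0 := log_ne_zero_of_pos_of_ne_one hb₀ hb₁
  have h := strictConvexOn_exp.2 (mem_univ (log b * r)) (mem_univ (log b * s))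
    (by simpa [hlog] using hrs) hα hβ hαβ
  simp only [smul_eq_mul] at h ⊢
  rw [rpow_def_of_pos hb₀, rpow_def_of_pos hb₀, rpow_def_of_pos hb₀,
    show log b * (α * r + β * s) = α * (log b * r) + β * (log b * s) by ring]
  nlinarith [mul_lt_mul_of_pos_left h hk]

lemma not_down_up_down {Φ E G : ℝ → ℝ} (hΦ : ∀ r, HasDerivAt Φ (E r * G r) r)
    (hE : ∀ r, 0 < E r) (hG : StrictConvexOn ℝ univ G) {r₁ r₂ r₃ r₄ : ℝ}
    (h₁₂ : r₁ < r₂) (h₂₃ : r₂ < r₃) (h₃₄ : r₃ < r₄) :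
    ¬ (Φ r₂ ≤ Φ r₁ ∧ Φ r₂ ≤ Φ r₃ ∧ Φ r₄ ≤ Φ r₃) := by
  have mvt : ∀ {u v}, u < v → ∃ ξ ∈ Ioo u v, SignType.sign (G ξ) = SignType.sign (Φ v - Φ u) := by
    intro u v huv
    obtain ⟨ξ, hξ, hslope⟩ := exists_hasDerivAt_eq_slope Φ (fun r => E r * G r) huv
      (fun t _ => (hΦ t).continuousAt.continuousWithinAt) (fun t _ => hΦ t)
    refine ⟨ξ, hξ, ?_⟩
    rw [eq_div_iff (sub_pos.2 huv).ne', mul_comm, ← mul_assoc] at hslope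
    rw [← hslope, sign_mul, sign_pos (mul_pos (sub_pos.2 huv) (hE ξ)), one_mul]
  rintro ⟨hdown, hup, hdown'⟩
  obtain ⟨ξ₁, hξ₁, hs₁⟩ := mvt h₁₂
  obtain ⟨ξ₂, hξ₂, hs₂⟩ := mvt h₂₃
  obtain ⟨ξ₃, hξ₃, hs₃⟩ := mvt h₃₄
  have hG₁ : G ξ₁ ≤ 0 := sign_nonpos_iff.1 (hs₁ ▸ sign_nonpos_iff.2 (sub_nonpos.2 hdown))
  have hG₂ : 0 ≤ G ξ₂ := sign_nonneg_iff.1 (hs₂ ▸ sign_nonneg_iff.2 (sub_nonneg.2 hup))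
  have hG₃ : G ξ₃ ≤ 0 := sign_nonpos_iff.1 (hs₃ ▸ sign_nonpos_iff.2 (sub_nonpos.2 hdown'))
  have h₁₂' : ξ₁ < ξ₂ := hξ₁.2.trans hξ₂.1
  have h₂₃' : ξ₂ < ξ₃ := hξ₂.2.trans hξ₃.1
  have := hG.lt_on_openSegment (mem_univ _) (mem_univ _) (h₁₂'.trans h₂₃').ne
    (by rw [openSegment_eq_Ioo (h₁₂'.trans h₂₃')]; exact ⟨h₁₂', h₂₃'⟩)
  exact absurd (this.trans_le (max_le hG₁ hG₃)) hG₂.not_gt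

lemma hasDerivAt_powDefect_sub_const_mul {x : ℝ} (hx₀ : 0 < x) (hx₁ : x < 1) (c r : ℝ) :
    HasDerivAt (fun r => powDefect x r - c * powDefect (1 / 2) r)
      ((1 / 2) ^ r * (-log x * (2 * x) ^ r - log (1 - x) * (2 * (1 - x)) ^ r - 2 * c * log 2))
      r := by
  refine ((hasDerivAt_powDefect hx₀ hx₁ r).sub
    ((hasDerivAt_powDefect (x := 1 / 2) (by norm_num) (by norm_num) r).const_mul c)).congr_deriv ?_
  have hx : (1 / 2 : ℝ) ^ r * (2 * x) ^ r = x ^ r := by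
    rw [← mul_rpow (by norm_num) (by positivity)]; congr 1; ring
  have hx' : (1 / 2 : ℝ) ^ r * (2 * (1 - x)) ^ r = (1 - x) ^ r := by
    rw [← mul_rpow (by norm_num) (by linarith)]; congr 1; ring
  rw [show (1 : ℝ) - 1 / 2 = 1 / 2 by norm_num, one_div, log_inv, ← one_div]
  linear_combination log x * hx + log (1 - x) * hx'

lemma strictConvexOn_powDefect_sub_const_mul_deriv {x : ℝ} (hx₀ : 0 < x) (hx₁ : x < 1)
    (hx : x ≠ 1 / 2) (c : ℝ) :
    StrictConvexOn ℝ univ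
      (fun r : ℝ => -log x * (2 * x) ^ r - log (1 - x) * (2 * (1 - x)) ^ r - 2 * c * log 2) := by
  have h₁ := strictConvexOn_const_mul_rpow (b := 2 * x) (k := -log x) (by positivity)
    (by contrapose! hx; linarith) (neg_pos.2 (log_neg hx₀ hx₁))
  have h₂ := strictConvexOn_const_mul_rpow (b := 2 * (1 - x)) (k := -log (1 - x)) (by linarith)
    (by contrapose! hx; linarith) (neg_pos.2 (log_neg (by linarith) (by linarith)))
  refine ((h₁.add h₂).add_const (-(2 * c * log 2))).congr fun r _ => ?_
  simp only [Pi.add_apply]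
  ring

lemma four_mul_powDefect_half_lt_powDefect {x p : ℝ} (hx₀ : 0 < x) (hx₁ : x < 1)
    (hx : x ≠ 1 / 2) (hp₁ : 1 < p) (hp₂ : p < 2) :
    4 * x * (1 - x) * powDefect (1 / 2) p < powDefect x p := by
  by_contra! h
  refine not_down_up_down (hasDerivAt_powDefect_sub_const_mul hx₀ hx₁ (4 * x * (1 - x)))
    (fun r => by positivity) (strictConvexOn_powDefect_sub_const_mul_deriv hx₀ hx₁ hx _)
    hp₁ hp₂ (by norm_num : (2 : ℝ) < 3) ?_
  simp only [powDefect_one, powDefect_two, powDefect_three]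
  refine ⟨?_, ?_, ?_⟩ <;> linarith

lemma powDefect_mul_powDefect_half_lt {x p q : ℝ} (hx₀ : 0 < x) (hx₁ : x < 1) (hx : x ≠ 1 / 2)
    (hp₁ : 1 < p) (hp₂ : p < 2) (hpq : p < q) (hq₃ : q < 3) :
    powDefect x q * powDefect (1 / 2) p < powDefect (1 / 2) q * powDefect x p := by
  have hP : 0 < powDefect (1 / 2) p := powDefect_pos (by norm_num) (by norm_num) hp₁
  set c := powDefect x p / powDefect (1 / 2) p
  have hcP : c * powDefect (1 / 2) p = powDefect x p := div_mul_cancel₀ _ hP.ne'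
  have hc₃ : 4 * x * (1 - x) < c :=
    (lt_div_iff₀ hP).2 (four_mul_powDefect_half_lt_powDefect hx₀ hx₁ hx hp₁ hp₂)
  have hq : powDefect x q < c * powDefect (1 / 2) q := by
    by_contra! h
    refine not_down_up_down (hasDerivAt_powDefect_sub_const_mul hx₀ hx₁ c)
      (fun r => by positivity) (strictConvexOn_powDefect_sub_const_mul_deriv hx₀ hx₁ hx c)
      hp₁ hpq hq₃ ?_
    simp only [powDefect_one, powDefect_three]
    refine ⟨?_, ?_, ?_⟩ <;> nlinarith
  calc powDefect x q * powDefect (1 / 2) p < c * powDefect (1 / 2) q * powDefect (1 / 2) p :=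
        mul_lt_mul_of_pos_right hq hP
    _ = powDefect (1 / 2) q * powDefect x p := by rw [← hcP]; ring

lemma powDefect_mul_powDefect_half_le {x p q : ℝ} (hx₀ : 0 ≤ x) (hx₁ : x ≤ 1)
    (hp₁ : 1 < p) (hp₂ : p < 2) (hpq : p < q) (hq₃ : q < 3) :
    powDefect x q * powDefect (1 / 2) p ≤ powDefect (1 / 2) q * powDefect x p := by
  rcases hx₀.eq_or_lt with rfl | hx₀
  · simp [powDefect_zero (by linarith : p ≠ 0), powDefect_zero (by linarith : q ≠ 0)]
  rcases hx₁.eq_or_lt with rfl | hx₁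
  · simp [powDefect, zero_rpow (by linarith : p ≠ 0), zero_rpow (by linarith : q ≠ 0)]
  rcases eq_or_ne x (1 / 2) with rfl | hx
  · rw [mul_comm]
  exact (powDefect_mul_powDefect_half_lt hx₀ hx₁ hx hp₁ hp₂ hpq hq₃).le

theorem min_f_sharp_transition_general
    (p q lam : ℝ) (hp : 1 < p) (hp2 : p < 2) (hq3 : q < 3)
    (hpq : p < q)
    (f : ℝ → ℝ)
    (hf : ∀ x, f x = x ^ q + (1 - x) ^ q - lam * (x ^ p + (1 - x) ^ p))
    (lamc : ℝ) (hlamc : lamc = (1 - 2 ^ (1 - q)) / (1 - 2 ^ (1 - p))) :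
    (lamc < lam → ∀ x ∈ Icc (0 : ℝ) (1/2), x ≠ 0 → f 0 < f x) ∧
    (lam < lamc → ∀ x ∈ Icc (0 : ℝ) (1/2), x ≠ 1/2 → f (1/2) < f x) := by
  have hf' : ∀ x, f x = 1 - powDefect x q - lam * (1 - powDefect x p) := fun x => by
    rw [hf, powDefect, powDefect]; ring
  have hPp : 0 < powDefect (1 / 2) p := powDefect_pos (by norm_num) (by norm_num) hp
  have hPq : powDefect (1 / 2) q = lamc * powDefect (1 / 2) p := by
    rw [hlamc, ← powDefect_half, ← powDefect_half, div_mul_cancel₀ _ hPp.ne']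
  have hcore : ∀ x ∈ Icc (0 : ℝ) (1 / 2), powDefect x q ≤ lamc * powDefect x p := by
    intro x hx
    have h := powDefect_mul_powDefect_half_le hx.1 (by linarith [hx.2]) hp hp2 hpq hq3
    rw [hPq] at h
    exact le_of_mul_le_mul_right (by linarith) hPp
  refine ⟨fun hlam x hx hx0 => ?_, fun hlam x hx hx2 => ?_⟩
  · have hpos := powDefect_pos (lt_of_le_of_ne hx.1 (Ne.symm hx0)) (by linarith [hx.2]) hp
    rw [hf', hf', powDefect_zero (by linarith), powDefect_zero (by linarith)]
    linarith [hcore x hx, mul_lt_mul_of_pos_right hlam hpos]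
  · have hlt := powDefect_lt_powDefect_half hx.1 (by linarith [hx.2]) hx2 hp
    rw [hf', hf']
    linarith [hcore x hx, mul_lt_mul_of_pos_right hlam (sub_pos.2 hlt)]

/-- Case `s < 2` of Lemma: with `1 < p < 2`, `1 < q < 3`, `p < q` and `λ ≥ 0`,
the minimum of `f_λ(x) = x^q + (1-x)^q - λ(x^p + (1-x)^p)` on `[0,1/2]` is attained
only at `x = 0` when `λ > λ_c` and only at `x = 1/2` when `λ < λ_c`, where
`λ_c = (1 - 2^(1-q))/(1 - 2^(1-p))`. -/
theorem min_f_sharp_transition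
    (p q lam : ℝ) (hp : 1 < p) (hp2 : p < 2) (hq1 : 1 < q) (hq3 : q < 3)
    (hpq : p < q) (hlam : 0 ≤ lam)
    (f : ℝ → ℝ)
    (hf : ∀ x, f x = x ^ q + (1 - x) ^ q - lam * (x ^ p + (1 - x) ^ p))
    (lamc : ℝ) (hlamc : lamc = (1 - 2 ^ (1 - q)) / (1 - 2 ^ (1 - p))) :
    (lamc < lam → ∀ x ∈ Icc (0 : ℝ) (1/2), x ≠ 0 → f 0 < f x) ∧
    (lam < lamc → ∀ x ∈ Icc (0 : ℝ) (1/2), x ≠ 1/2 → f (1/2) < f x) :=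
  min_f_sharp_transition_general p q lam hp hp2 hq3 hpq f hf lamc hlamc
end

section
/- Let 1 < q < p < 2. Define f_λ(x) = x^q + (1−x)^q − λ(x^p + (1−x)^p) on [0, 1/2]. If λ ≤ λ_min := (q(q−1))/(p(p−1)) · 2^{p−q}, then the minimum of f_λ on [0,1/2] is attained at x = 1/2; if λ ≥ λ_max := q/p, then the minimum is attained at x = 0. -/
/-!
Write `f_λ = powSum q - λ • powSum p` with `powSum r x = x ^ r + (1 - x) ^ r` and
`powDiff r x = x ^ r - (1 - x) ^ r`, so that `(powSum r)' = r • powDiff (r - 1)` and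
`(powDiff r)' = r • powSum (r - 1)`.

For `λ ≤ λ_min` the function `f_λ` is convex on `[0, 1]`: its second derivative is
`q(q-1) powSum (q-2) - λ p(p-1) powSum (p-2)`, and `2^(p-q) powSum (p-2) ≤ powSum (q-2)` because
`r ↦ (2x)^r + (2-2x)^r` is convex and equals `2` at `r = 0` and `r = 1`, hence is antitone on
`r ≤ 0`. Being symmetric under `x ↦ 1 - x`, `f_λ` is then minimal at `1/2`.

For `λ ≥ q/p`, since `powSum p ≤ 1` it suffices that `p • powSum q - q • powSum p` is monotone on
`[0, 1/2]`. Its derivative is `pq (powDiff (q-1) - powDiff (p-1))`, and `r ↦ powDiff r x` is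
antitone on `r ≤ 1` for `x ≤ 1/2`; this reduces to `negMulLog (1 - x) ≤ negMulLog x`, which holds
because `x ↦ negMulLog x - negMulLog (1 - x)` is concave on `[0, 1/2]` and vanishes at both ends.
-/

open Real Set

theorem ConvexOn.antitoneOn_Iic_of_le {g : ℝ → ℝ} (hg : ConvexOn ℝ univ g) {a b : ℝ}
    (hab : a < b) (hba : g b ≤ g a) : AntitoneOn g (Iic a) := by
  intro t _ s hs hts
  have has : g a ≤ g s := hg.le_left_of_right_le'' trivial trivial hs hab hba
  exact hg.le_left_of_right_le'' trivial trivial hts (hs.trans_lt hab) (hba.trans has)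

theorem ConvexOn.apply_half_le {g : ℝ → ℝ} {s : Set ℝ} (hg : ConvexOn ℝ s g) {x : ℝ}
    (hx : x ∈ s) (hx' : 1 - x ∈ s) (hsymm : g (1 - x) = g x) : g (1 / 2) ≤ g x := by
  have h := hg.2 hx hx' (by norm_num : (0 : ℝ) ≤ 1 / 2) (by norm_num : (0 : ℝ) ≤ 1 / 2)
    (by norm_num)
  simp only [smul_eq_mul, hsymm] at h
  rw [show 1 / 2 * x + 1 / 2 * (1 - x) = (1 / 2 : ℝ) by ring] at h
  linarith

lemma negMulLog_one_sub_le {a : ℝ} (h0 : 0 ≤ a) (h1 : a ≤ 1 / 2) :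
    negMulLog (1 - a) ≤ negMulLog a := by
  have hmem : ∀ x ∈ interior (Icc (0 : ℝ) (1 / 2)), 0 < x ∧ x < 1 - x := fun x hx => by
    rw [interior_Icc] at hx
    exact ⟨hx.1, by linarith [hx.2]⟩
  have hconc : ConcaveOn ℝ (Icc 0 (1 / 2)) fun x => negMulLog x - negMulLog (1 - x) := by
    refine concaveOn_of_hasDerivWithinAt2_nonpos (convex_Icc 0 (1 / 2))
      (f' := fun x => -log x - log (1 - x) - 2) (f'' := fun x => (1 - x)⁻¹ - x⁻¹)
      (continuous_negMulLog.sub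
        (continuous_negMulLog.comp (continuous_const.sub continuous_id))).continuousOn
      (fun x hx => ?_) (fun x hx => ?_) (fun x hx => ?_)
    · obtain ⟨hx0, hx1⟩ := hmem x hx
      have h := (hasDerivAt_negMulLog hx0.ne').sub ((hasDerivAt_negMulLog
        (by linarith : (0 : ℝ) < 1 - x).ne').comp x ((hasDerivAt_id' x).const_sub 1))
      exact (h.congr_deriv (by ring)).hasDerivWithinAt
    · obtain ⟨hx0, hx1⟩ := hmem x hx
      have h := ((hasDerivAt_log hx0.ne').neg.sub
        (((hasDerivAt_id' x).const_sub 1).log (by linarith : (0 : ℝ) < 1 - x).ne')).sub_const 2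
      exact (h.congr_deriv (by field_simp; ring)).hasDerivWithinAt
    · obtain ⟨hx0, hx1⟩ := hmem x hx
      exact sub_nonpos.2 (inv_anti₀ hx0 hx1.le)
  have h := hconc.min_le_of_mem_Icc (left_mem_Icc.2 (by norm_num)) (right_mem_Icc.2 (by norm_num))
    ⟨h0, h1⟩
  norm_num at h
  linarith

noncomputable def powSum (r x : ℝ) : ℝ := x ^ r + (1 - x) ^ r

noncomputable def powDiff (r x : ℝ) : ℝ := x ^ r - (1 - x) ^ r

section PowSum

variable {r x : ℝ}

lemma powSum_one_sub (r x : ℝ) : powSum r (1 - x) = powSum r x := by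
  rw [powSum, powSum, sub_sub_cancel, add_comm]

lemma powSum_zero (hr : r ≠ 0) : powSum r 0 = 1 := by
  simp [powSum, zero_rpow hr]

lemma powSum_nonneg (hx0 : 0 ≤ x) (hx1 : x ≤ 1) : 0 ≤ powSum r x :=
  add_nonneg (rpow_nonneg hx0 r) (rpow_nonneg (sub_nonneg.2 hx1) r)

lemma powSum_le_one (hr : 1 ≤ r) (hx0 : 0 ≤ x) (hx1 : x ≤ 1) : powSum r x ≤ 1 := by
  simpa [powSum] using add_rpow_le_rpow_add hx0 (sub_nonneg.2 hx1) hr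

lemma continuous_powSum (hr : 0 ≤ r) : Continuous (powSum r) :=
  (continuous_rpow_const hr).add
    ((continuous_rpow_const hr).comp (continuous_const.sub continuous_id))

lemma hasDerivAt_one_sub_rpow (r : ℝ) (hx : x ≠ 1) :
    HasDerivAt (fun y => (1 - y) ^ r) (-(r * (1 - x) ^ (r - 1))) x := by
  have h := (hasDerivAt_rpow_const (p := r) (Or.inl (sub_ne_zero.2 hx.symm))).comp x
    ((hasDerivAt_id x).const_sub 1)
  exact h.congr_deriv (by ring)

lemma hasDerivAt_powSum (r : ℝ) (hx0 : x ≠ 0) (hx1 : x ≠ 1) :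
    HasDerivAt (powSum r) (r * powDiff (r - 1) x) x := by
  refine ((hasDerivAt_rpow_const (Or.inl hx0)).add (hasDerivAt_one_sub_rpow r hx1)).congr_deriv ?_
  unfold powDiff; ring

lemma hasDerivAt_powDiff (r : ℝ) (hx0 : x ≠ 0) (hx1 : x ≠ 1) :
    HasDerivAt (powDiff r) (r * powSum (r - 1) x) x := by
  refine ((hasDerivAt_rpow_const (Or.inl hx0)).sub (hasDerivAt_one_sub_rpow r hx1)).congr_deriv ?_
  unfold powSum; ring

end PowSum

lemma antitoneOn_two_rpow_mul_powSum {x : ℝ} (hx0 : 0 < x) (hx1 : x < 1) :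
    AntitoneOn (fun r => 2 ^ r * powSum r x) (Iic 0) := by
  have hscale : (fun r => 2 ^ r * powSum r x) = fun r => (2 * x) ^ r + (2 * (1 - x)) ^ r := by
    ext r
    rw [powSum, mul_add, mul_rpow zero_le_two hx0.le, mul_rpow zero_le_two (by linarith)]
  rw [hscale]
  refine ((convexOn_rpow_left (by positivity)).add
    (convexOn_rpow_left (by linarith))).antitoneOn_Iic_of_le zero_lt_one ?_
  simp only [Pi.add_apply, rpow_one, rpow_zero]
  linarith

lemma two_rpow_sub_mul_powSum_le {p q x : ℝ} (hqp : q ≤ p) (hp : p ≤ 2) (hx0 : 0 < x)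
    (hx1 : x < 1) : 2 ^ (p - q) * powSum (p - 2) x ≤ powSum (q - 2) x := by
  have h := antitoneOn_two_rpow_mul_powSum hx0 hx1 (show q - 2 ≤ 0 by linarith)
    (show p - 2 ≤ 0 by linarith) (by linarith)
  have hsplit : (2 : ℝ) ^ (p - 2) = 2 ^ (q - 2) * 2 ^ (p - q) := by
    rw [← rpow_add two_pos]
    congr 1
    ring
  dsimp only at h
  rw [hsplit, mul_assoc] at h
  exact le_of_mul_le_mul_left h (by positivity)

lemma convexOn_powSum_sub_mul_powSum {p q lam : ℝ} (hq : 1 ≤ q) (hqp : q ≤ p) (hp : p ≤ 2)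
    (hlam : lam * (p * (p - 1)) ≤ q * (q - 1) * 2 ^ (p - q)) :
    ConvexOn ℝ (Icc 0 1) (fun x => powSum q x - lam * powSum p x) := by
  have hmem : ∀ x ∈ interior (Icc (0 : ℝ) 1), x ≠ 0 ∧ x ≠ 1 := fun x hx => by
    rw [interior_Icc] at hx
    exact ⟨hx.1.ne', hx.2.ne⟩
  refine convexOn_of_hasDerivWithinAt2_nonneg (convex_Icc 0 1)
    (f' := fun x => q * powDiff (q - 1) x - lam * (p * powDiff (p - 1) x))
    (f'' := fun x => q * ((q - 1) * powSum (q - 2) x) - lam * (p * ((p - 1) * powSum (p - 2) x)))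
    ((continuous_powSum (by linarith)).sub
      (continuous_const.mul (continuous_powSum (by linarith)))).continuousOn
    (fun x hx => ?_) (fun x hx => ?_) (fun x hx => ?_)
  · obtain ⟨hx0, hx1⟩ := hmem x hx
    exact ((hasDerivAt_powSum q hx0 hx1).sub
      ((hasDerivAt_powSum p hx0 hx1).const_mul lam)).hasDerivWithinAt
  · obtain ⟨hx0, hx1⟩ := hmem x hx
    have h := ((hasDerivAt_powDiff (q - 1) hx0 hx1).const_mul q).sub
      (((hasDerivAt_powDiff (p - 1) hx0 hx1).const_mul p).const_mul lam)
    rw [sub_sub, one_add_one_eq_two, sub_sub, one_add_one_eq_two] at h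
    exact h.hasDerivWithinAt
  · rw [interior_Icc] at hx
    have hcmp := two_rpow_sub_mul_powSum_le hqp hp hx.1 hx.2
    have hSp := powSum_nonneg (r := p - 2) hx.1.le hx.2.le
    refine sub_nonneg.2 ?_
    calc lam * (p * ((p - 1) * powSum (p - 2) x))
        = lam * (p * (p - 1)) * powSum (p - 2) x := by ring
      _ ≤ q * (q - 1) * 2 ^ (p - q) * powSum (p - 2) x := mul_le_mul_of_nonneg_right hlam hSp
      _ = q * (q - 1) * (2 ^ (p - q) * powSum (p - 2) x) := by ring
      _ ≤ q * (q - 1) * powSum (q - 2) x :=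
        mul_le_mul_of_nonneg_left hcmp (mul_nonneg (by linarith) (by linarith))
      _ = q * ((q - 1) * powSum (q - 2) x) := by ring

lemma hasDerivAt_powDiff_exponent {x : ℝ} (hx0 : 0 < x) (hx1 : x < 1) (r : ℝ) :
    HasDerivAt (fun s => powDiff s x)
      ((1 - x) ^ (r - 1) * negMulLog (1 - x) - x ^ (r - 1) * negMulLog x) r := by
  have hx1' : 0 < 1 - x := sub_pos.2 hx1
  refine ((hasStrictDerivAt_const_rpow hx0 r).hasDerivAt.sub
    (hasStrictDerivAt_const_rpow hx1' r).hasDerivAt).congr_deriv ?_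
  rw [negMulLog, negMulLog, rpow_sub_one hx0.ne', rpow_sub_one hx1'.ne']
  field_simp
  ring

lemma antitoneOn_powDiff_exponent {x : ℝ} (hx0 : 0 < x) (hx : x ≤ 1 / 2) :
    AntitoneOn (fun r => powDiff r x) (Iic 1) := by
  have hx1 : x ≤ 1 - x := by linarith
  refine antitoneOn_of_hasDerivWithinAt_nonpos (convex_Iic 1)
    (fun r _ => (hasDerivAt_powDiff_exponent hx0 (by linarith) r).continuousAt.continuousWithinAt)
    (fun r _ => (hasDerivAt_powDiff_exponent hx0 (by linarith) r).hasDerivWithinAt)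
    (fun r hr => sub_nonpos.2 ?_)
  rw [interior_Iic] at hr
  calc (1 - x) ^ (r - 1) * negMulLog (1 - x)
      ≤ x ^ (r - 1) * negMulLog (1 - x) :=
        mul_le_mul_of_nonneg_right (rpow_le_rpow_of_nonpos hx0 hx1 (by linarith [mem_Iio.1 hr]))
          (negMulLog_nonneg (by linarith) (by linarith))
    _ ≤ x ^ (r - 1) * negMulLog x :=
        mul_le_mul_of_nonneg_left (negMulLog_one_sub_le hx0.le hx) (rpow_nonneg hx0.le _)

lemma monotoneOn_mul_powSum_sub_mul_powSum {p q : ℝ} (hq : 1 ≤ q) (hqp : q ≤ p) (hp : p ≤ 2) :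
    MonotoneOn (fun x => p * powSum q x - q * powSum p x) (Icc 0 (1 / 2)) := by
  refine monotoneOn_of_hasDerivWithinAt_nonneg (convex_Icc 0 (1 / 2))
    (f' := fun x => p * (q * powDiff (q - 1) x) - q * (p * powDiff (p - 1) x))
    ((continuous_const.mul (continuous_powSum (by linarith))).sub
      (continuous_const.mul (continuous_powSum (by linarith)))).continuousOn
    (fun x hx => ?_) (fun x hx => ?_) <;> rw [interior_Icc] at hx
  · exact (((hasDerivAt_powSum q hx.1.ne' (by linarith [hx.2])).const_mul p).sub
      ((hasDerivAt_powSum p hx.1.ne' (by linarith [hx.2])).const_mul q)).hasDerivWithinAt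
  · have h := antitoneOn_powDiff_exponent hx.1 hx.2.le (show q - 1 ≤ 1 by linarith)
      (show p - 1 ≤ 1 by linarith) (by linarith)
    have hpq : 0 ≤ p * q := mul_nonneg (by linarith) (by linarith)
    calc (0 : ℝ) ≤ p * q * (powDiff (q - 1) x - powDiff (p - 1) x) :=
          mul_nonneg hpq (sub_nonneg.2 h)
      _ = p * (q * powDiff (q - 1) x) - q * (p * powDiff (p - 1) x) := by ring

lemma powSum_sub_mul_powSum_zero_le {p q lam x : ℝ} (hq : 1 ≤ q) (hqp : q ≤ p) (hp : p ≤ 2)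
    (hlam : q / p ≤ lam) (hx : x ∈ Icc (0 : ℝ) (1 / 2)) :
    powSum q 0 - lam * powSum p 0 ≤ powSum q x - lam * powSum p x := by
  have hp0 : 0 < p := by linarith
  have hG := monotoneOn_mul_powSum_sub_mul_powSum hq hqp hp (left_mem_Icc.2 (by norm_num)) hx hx.1
  have hSp := powSum_le_one (by linarith : 1 ≤ p) hx.1 (by linarith [hx.2])
  have hlam' : q ≤ lam * p := (div_le_iff₀ hp0).1 hlam
  simp only [powSum_zero hp0.ne', powSum_zero (by linarith : 0 < q).ne'] at hG ⊢
  nlinarith [mul_le_mul_of_nonneg_right hlam' (sub_nonneg.2 hSp)]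

theorem min_f_smooth_transition_endpoints_general
    (p q lam : ℝ) (hq : 1 < q) (hqp : q < p) (hp : p < 2)
    (f : ℝ → ℝ)
    (hf : ∀ x, f x = x ^ q + (1 - x) ^ q - lam * (x ^ p + (1 - x) ^ p))
    (lamMin lamMax : ℝ)
    (hmin : lamMin = (q * (q - 1)) / (p * (p - 1)) * 2 ^ (p - q))
    (hmax : lamMax = q / p) :
    (lam ≤ lamMin → ∀ x ∈ Icc (0 : ℝ) (1/2), f (1/2) ≤ f x) ∧
    (lamMax ≤ lam → ∀ x ∈ Icc (0 : ℝ) (1/2), f 0 ≤ f x) := by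
  obtain rfl : f = fun x => powSum q x - lam * powSum p x := funext hf
  subst hmin hmax
  refine ⟨fun hlam x hx => ?_,
    fun hlam x hx => powSum_sub_mul_powSum_zero_le hq.le hqp.le hp.le hlam hx⟩
  have hlam' : lam * (p * (p - 1)) ≤ q * (q - 1) * 2 ^ (p - q) := by
    rwa [← le_div_iff₀ (by nlinarith), mul_div_right_comm]
  exact (convexOn_powSum_sub_mul_powSum hq.le hqp.le hp.le hlam').apply_half_le
    ⟨hx.1, by linarith [hx.2]⟩ ⟨by linarith [hx.2], by linarith [hx.1]⟩
    (by simp only [powSum_one_sub])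

/-- Case `s > 2` of Lemma: with `1 < q < p < 2`, the minimum of
`f_λ(x) = x^q + (1-x)^q - λ(x^p + (1-x)^p)` on `[0,1/2]` is attained at `x = 1/2`
when `λ ≤ λ_min = (q(q-1))/(p(p-1))·2^(p-q)`, and at `x = 0` when `λ ≥ λ_max = q/p`. -/
theorem min_f_smooth_transition_endpoints
    (p q lam : ℝ) (hq : 1 < q) (hqp : q < p) (hp : p < 2) (hlam : 0 ≤ lam)
    (f : ℝ → ℝ)
    (hf : ∀ x, f x = x ^ q + (1 - x) ^ q - lam * (x ^ p + (1 - x) ^ p))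
    (lamMin lamMax : ℝ)
    (hmin : lamMin = (q * (q - 1)) / (p * (p - 1)) * 2 ^ (p - q))
    (hmax : lamMax = q / p) :
    (lam ≤ lamMin → ∀ x ∈ Icc (0 : ℝ) (1/2), f (1/2) ≤ f x) ∧
    (lamMax ≤ lam → ∀ x ∈ Icc (0 : ℝ) (1/2), f 0 ≤ f x) :=
  min_f_smooth_transition_endpoints_general p q lam hq hqp hp f hf lamMin lamMax hmin hmax
end

section
/- Let 1 < q < p < 2 and λ ∈ (λ_min, λ_max) with λ_min = (q(q−1))/(p(p−1))·2^{p−q} and λ_max = q/p. Then the minimum of f_λ(x) = x^q + (1−x)^q − λ(x^p + (1−x)^p) on [0,1/2] is attained at a unique point strictly between 0 and 1/2. -/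
/-!
Write `u_c(x) = (1 - x)^c - x^c`, which is positive on `[0, 1/2)` for `c > 0`. Then
`f_λ' = -(q u_{q-1} - λ p u_{p-1})`. At `0` this is `λ p - q < 0`; at `1/2` it vanishes and,
because `λ > λ_min`, its derivative there is negative, so `f_λ'` is positive just left of `1/2`.
Hence `f_λ'` has a zero `x₀` in `(0, 1/2)`, and it is the only sign change because
`u_{q-1} / u_{p-1}` is strictly decreasing on `(0, 1/2)`. Substituting `x = e^{m-δ}`,
`1 - x = e^{m+δ}`, that monotonicity comes down to `s ↦ s cosh((1-s)δ) / sinh(sδ)` decreasing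
on `(0, 1)`, i.e. to `sinh t < t cosh t` for `t > 0`.
-/

open Real Set Filter Topology

lemma sinh_lt_mul_cosh {x : ℝ} (hx : 0 < x) : sinh x < x * cosh x := by
  have hmono : StrictMonoOn (fun t : ℝ => t * cosh t - sinh t) (Ici 0) := by
    refine strictMonoOn_of_hasDerivWithinAt_pos (convex_Ici 0) (by fun_prop)
      (f' := fun t => t * sinh t) (fun t _ => ?_) (fun t ht => ?_)
    · exact (((hasDerivAt_id t).mul (hasDerivAt_cosh t)).sub (hasDerivAt_sinh t)
        |>.congr_deriv (by simp only [id_eq]; ring)).hasDerivWithinAt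
    · rw [interior_Ici] at ht
      exact mul_pos ht (sinh_pos_iff.2 ht)
  simpa using hmono self_mem_Ici hx.le hx

lemma cosh_mul_sinh_lt_mul_cosh_add {x y : ℝ} (hx : 0 < x) (hy : 0 < y) :
    cosh x * sinh y < y * cosh (x + y) := by
  have h₁ : cosh x * sinh y < cosh x * (y * cosh y) :=
    mul_lt_mul_of_pos_left (sinh_lt_mul_cosh hy) (cosh_pos x)
  have h₂ : 0 < y * (sinh x * sinh y) := by
    have := sinh_pos_iff.2 hx; have := sinh_pos_iff.2 hy; positivity
  rw [cosh_add]
  linarith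

lemma strictAntiOn_mul_cosh_div_sinh {δ : ℝ} (hδ : 0 < δ) :
    StrictAntiOn (fun s => s * cosh ((1 - s) * δ) / sinh (s * δ)) (Ioo 0 1) := by
  have hsinh : ∀ s ∈ Ioo (0 : ℝ) 1, 0 < sinh (s * δ) := fun s hs =>
    sinh_pos_iff.2 (mul_pos hs.1 hδ)
  have hderiv : ∀ s ∈ Ioo (0 : ℝ) 1,
      HasDerivAt (fun s => s * cosh ((1 - s) * δ) / sinh (s * δ))
        (((cosh ((1 - s) * δ) - s * δ * sinh ((1 - s) * δ)) * sinh (s * δ)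
          - s * cosh ((1 - s) * δ) * (cosh (s * δ) * δ)) / sinh (s * δ) ^ 2) s := by
    intro s hs
    have hA : HasDerivAt (fun s => (1 - s) * δ) (-δ) s := by
      simpa using ((hasDerivAt_id s).const_sub 1).mul_const δ
    have hB : HasDerivAt (fun s => s * δ) δ s := by simpa using (hasDerivAt_id s).mul_const δ
    have hN : HasDerivAt (fun s => s * cosh ((1 - s) * δ))
        (cosh ((1 - s) * δ) - s * δ * sinh ((1 - s) * δ)) s :=
      ((hasDerivAt_id' s).mul hA.cosh).congr_deriv (by ring)
    exact hN.div hB.sinh (hsinh s hs).ne'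
  refine strictAntiOn_of_hasDerivWithinAt_neg (convex_Ioo 0 1)
    (fun s hs => (hderiv s hs).continuousAt.continuousWithinAt)
    (fun s hs => (hderiv s (interior_subset hs)).hasDerivWithinAt) (fun s hs => ?_)
  rw [interior_Ioo] at hs
  -- the numerator is `cosh A sinh B - B cosh (A + B)` with `A = (1 - s) δ`, `B = s δ`
  have key := cosh_mul_sinh_lt_mul_cosh_add (mul_pos (sub_pos.2 hs.2) hδ) (mul_pos hs.1 hδ)
  rw [cosh_add] at key
  have := hsinh s hs
  apply div_neg_of_neg_of_pos _ (by positivity)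
  linarith

section rpow
variable {x y : ℝ}

lemma rpow_sub_rpow_eq_two_mul_exp_mul_sinh (hx : 0 < x) (hy : 0 < y) (c : ℝ) :
    y ^ c - x ^ c = 2 * exp (c * ((log x + log y) / 2)) * sinh (c * ((log y - log x) / 2)) := by
  rw [rpow_def_of_pos hx, rpow_def_of_pos hy, sinh_eq, mul_assoc, mul_div_assoc', mul_sub,
    ← exp_add, ← exp_add]
  ring_nf

lemma rpow_add_rpow_eq_two_mul_exp_mul_cosh (hx : 0 < x) (hy : 0 < y) (c : ℝ) :
    y ^ c + x ^ c = 2 * exp (c * ((log x + log y) / 2)) * cosh (c * ((log y - log x) / 2)) := by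
  rw [rpow_def_of_pos hx, rpow_def_of_pos hy, cosh_eq, mul_assoc, mul_div_assoc', mul_add,
    ← exp_add, ← exp_add]
  ring_nf

lemma strictAntiOn_mul_rpow_add_rpow_div_rpow_sub_rpow (hx : 0 < x) (hxy : x < y) :
    StrictAntiOn (fun c => c * (y ^ (c - 1) + x ^ (c - 1)) / (y ^ c - x ^ c)) (Ioo 0 1) := by
  have hy := hx.trans hxy
  set m := (log x + log y) / 2
  set δ := (log y - log x) / 2
  have hδ : 0 < δ := by have := log_lt_log hx hxy; simp only [δ]; linarith
  have heq : ∀ c, c * (y ^ (c - 1) + x ^ (c - 1)) / (y ^ c - x ^ c)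
      = exp (-m) * (c * cosh ((1 - c) * δ) / sinh (c * δ)) := by
    intro c
    rw [rpow_add_rpow_eq_two_mul_exp_mul_cosh hx hy, rpow_sub_rpow_eq_two_mul_exp_mul_sinh hx hy,
      ← cosh_neg, show (c - 1) * m = c * m + -m by ring, exp_add]
    field_simp
    simp only [m, δ]
    ring_nf
  intro a ha b hb hab
  simp only [heq]
  exact mul_lt_mul_of_pos_left (strictAntiOn_mul_cosh_div_sinh hδ ha hb hab) (exp_pos _)

end rpow

noncomputable def powGap (c x : ℝ) : ℝ := (1 - x) ^ c - x ^ c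

section powGap
variable {a b c x : ℝ}

lemma powGap_zero (hc : c ≠ 0) : powGap c 0 = 1 := by
  simp [powGap, zero_rpow hc]

lemma powGap_half (c : ℝ) : powGap c (1 / 2) = 0 := by
  norm_num [powGap]

lemma powGap_pos (hc : 0 < c) (hx₀ : 0 ≤ x) (hx : x < 1 / 2) : 0 < powGap c x :=
  sub_pos.2 (rpow_lt_rpow hx₀ (by linarith) hc)

lemma continuous_powGap (hc : 0 ≤ c) : Continuous (powGap c) :=
  ((continuous_rpow_const hc).comp (continuous_const.sub continuous_id)).sub
    (continuous_rpow_const hc)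

lemma hasDerivAt_powGap (hx₀ : x ≠ 0) (hx₁ : 1 - x ≠ 0) :
    HasDerivAt (powGap c) (-(c * ((1 - x) ^ (c - 1) + x ^ (c - 1)))) x := by
  have h := (((hasDerivAt_id' x).const_sub 1).rpow_const (p := c) (Or.inl hx₁)).sub
    (hasDerivAt_rpow_const (p := c) (Or.inl hx₀))
  exact h.congr_deriv (by ring)

lemma hasDerivAt_powGap_half : HasDerivAt (powGap c) (-(c * 2 ^ (2 - c))) (1 / 2) := by
  have h : (1 / 2 : ℝ) ^ (c - 1) = 2 ^ (1 - c) := by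
    rw [one_div, inv_rpow zero_le_two, ← rpow_neg zero_le_two, neg_sub]
  convert hasDerivAt_powGap (c := c) (x := 1 / 2) (by norm_num) (by norm_num) using 2
  rw [show (1 : ℝ) - 1 / 2 = 1 / 2 by norm_num, h, show 2 - c = (1 - c) + 1 by ring,
    rpow_add_one two_ne_zero]
  ring

lemma hasDerivAt_rpow_add_rpow_one_sub (hc : 1 ≤ c) (x : ℝ) :
    HasDerivAt (fun x => x ^ c + (1 - x) ^ c) (-(c * powGap (c - 1) x)) x := by
  have h := (hasDerivAt_rpow_const (x := x) (Or.inr hc)).add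
    (((hasDerivAt_id' x).const_sub 1).rpow_const (Or.inr hc))
  exact h.congr_deriv (by rw [powGap]; ring)

lemma strictAntiOn_powGap_div (ha : 0 < a) (hab : a < b) (hb : b < 1) :
    StrictAntiOn (fun x => powGap a x / powGap b x) (Ioo 0 (1 / 2)) := by
  have hb₀ := ha.trans hab
  have hderiv : ∀ x ∈ Ioo (0 : ℝ) (1 / 2), ∀ c, HasDerivAt (powGap c)
      (-(c * ((1 - x) ^ (c - 1) + x ^ (c - 1)))) x := fun x hx c =>
    hasDerivAt_powGap hx.1.ne' (by linarith [hx.2])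
  have hquot : ∀ x ∈ Ioo (0 : ℝ) (1 / 2), HasDerivAt (fun x => powGap a x / powGap b x) _ x :=
    fun x hx => (hderiv x hx a).div (hderiv x hx b) (powGap_pos hb₀ hx.1.le hx.2).ne'
  refine strictAntiOn_of_hasDerivWithinAt_neg (convex_Ioo 0 (1 / 2))
    (fun x hx => (hquot x hx).continuousAt.continuousWithinAt)
    (fun x hx => (hquot x (interior_subset hx)).hasDerivWithinAt) (fun x hx => ?_)
  rw [interior_Ioo] at hx
  have hua := powGap_pos ha hx.1.le hx.2
  have hub := powGap_pos hb₀ hx.1.le hx.2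
  have key := strictAntiOn_mul_rpow_add_rpow_div_rpow_sub_rpow hx.1
    (by linarith [hx.2] : x < 1 - x) ⟨ha, hab.trans hb⟩ ⟨hb₀, hb⟩ hab
  change _ / powGap b x < _ / powGap a x at key
  rw [div_lt_div_iff₀ hub hua] at key
  apply div_neg_of_neg_of_pos _ (by positivity)
  linarith

end powGap

lemma exists_mem_Ioo_lt_of_hasDerivAt_pos {g : ℝ → ℝ} {g' a b : ℝ} (hg : HasDerivAt g g' b)
    (hg' : 0 < g') (hab : a < b) : ∃ x ∈ Ioo a b, g x < g b := by
  have hslope := (hasDerivAt_iff_tendsto_slope.1 hg).mono_left (nhdsLT_le_nhdsNE b)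
  obtain ⟨x, hx, hxab⟩ :=
    ((hslope.eventually (eventually_gt_nhds hg')).and (Ioo_mem_nhdsLT hab)).exists
  exact ⟨x, hxab, (slope_pos_iff_gt hxab.2).1 hx⟩

section comb
variable {a b κ μ : ℝ}

lemma exists_mul_powGap_eq_mul_powGap (ha : 0 < a) (hb : 0 < b) (h₀ : μ < κ)
    (h_half : κ * (a * 2 ^ (2 - a)) < μ * (b * 2 ^ (2 - b))) :
    ∃ x₀ ∈ Ioo 0 (1 / 2), κ * powGap a x₀ = μ * powGap b x₀ := by
  set g := fun x => κ * powGap a x - μ * powGap b x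
  have hg' : HasDerivAt g (κ * -(a * 2 ^ (2 - a)) - μ * -(b * 2 ^ (2 - b))) (1 / 2) :=
    (hasDerivAt_powGap_half.const_mul κ).sub (hasDerivAt_powGap_half.const_mul μ)
  obtain ⟨x₁, hx₁, hgx₁⟩ :=
    exists_mem_Ioo_lt_of_hasDerivAt_pos hg' (by linarith) one_half_pos
  have hg₀ : g 0 = κ - μ := by simp [g, powGap_zero ha.ne', powGap_zero hb.ne']
  have hg_cont : Continuous g :=
    (continuous_const.mul (continuous_powGap ha.le)).sub
      (continuous_const.mul (continuous_powGap hb.le))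
  have hg_half : g (1 / 2) = 0 := by simp only [g, powGap_half, mul_zero, sub_zero]
  obtain ⟨x₀, hx₀, hgx₀⟩ := intermediate_value_Ioo' hx₁.1.le hg_cont.continuousOn
    (⟨by linarith, by linarith⟩ : (0 : ℝ) ∈ Ioo (g x₁) (g 0))
  exact ⟨x₀, ⟨hx₀.1, hx₀.2.trans hx₁.2⟩, sub_eq_zero.1 hgx₀⟩

lemma mul_powGap_sub_mul_powGap_pos_and_neg (ha : 0 < a) (hab : a < b) (hb : b < 1)
    (hκ : 0 < κ) {x₀ x : ℝ} (hx₀ : x₀ ∈ Ioo 0 (1 / 2)) (hx : x ∈ Ioo 0 (1 / 2))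
    (h₀ : κ * powGap a x₀ = μ * powGap b x₀) :
    (x < x₀ → 0 < κ * powGap a x - μ * powGap b x) ∧
      (x₀ < x → κ * powGap a x - μ * powGap b x < 0) := by
  have hR := strictAntiOn_powGap_div ha hab hb
  have hub₀ := powGap_pos (ha.trans hab) hx₀.1.le hx₀.2
  have hub := powGap_pos (ha.trans hab) hx.1.le hx.2
  have hfac : κ * powGap a x - μ * powGap b x
      = κ * powGap b x * (powGap a x / powGap b x - powGap a x₀ / powGap b x₀) := by
    rw [show powGap a x₀ / powGap b x₀ = μ / κ from
      (div_eq_div_iff hub₀.ne' hκ.ne').2 (by linarith)]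
    field_simp
  rw [hfac]
  exact ⟨fun h => mul_pos (mul_pos hκ hub) (sub_pos.2 (hR hx hx₀ h)),
    fun h => mul_neg_of_pos_of_neg (mul_pos hκ hub) (sub_neg.2 (hR hx₀ hx h))⟩

end comb

lemma lt_of_hasDerivAt_neg_of_pos {f f' : ℝ → ℝ} {a b x₀ : ℝ} (hx₀ : x₀ ∈ Icc a b)
    (hf : ContinuousOn f (Icc a b)) (hf' : ∀ x ∈ Ioo a b, HasDerivAt f (f' x) x)
    (hneg : ∀ x ∈ Ioo a x₀, f' x < 0) (hpos : ∀ x ∈ Ioo x₀ b, 0 < f' x) {x : ℝ}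
    (hx : x ∈ Icc a b) (hne : x ≠ x₀) : f x₀ < f x := by
  rcases hne.lt_or_gt with hlt | hgt
  · refine strictAntiOn_of_hasDerivWithinAt_neg (convex_Icc a x₀) (f' := f')
      (hf.mono (Icc_subset_Icc_right hx₀.2)) (fun y hy => ?_) (fun y hy => ?_)
      ⟨hx.1, hlt.le⟩ ⟨hx₀.1, le_rfl⟩ hlt
    · rw [interior_Icc] at hy ⊢
      exact (hf' y ⟨hy.1, hy.2.trans_le hx₀.2⟩).hasDerivWithinAt
    · rw [interior_Icc] at hy
      exact hneg y hy
  · refine strictMonoOn_of_hasDerivWithinAt_pos (convex_Icc x₀ b) (f' := f')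
      (hf.mono (Icc_subset_Icc_left hx₀.1)) (fun y hy => ?_) (fun y hy => ?_)
      ⟨le_rfl, hx₀.2⟩ ⟨hgt.le, hx.2⟩ hgt
    · rw [interior_Icc] at hy ⊢
      exact (hf' y ⟨hx₀.1.trans_lt hy.1, hy.2⟩).hasDerivWithinAt
    · rw [interior_Icc] at hy
      exact hpos y hy

/-- With `1 < q < p < 2` and `λ_min < λ < λ_max`, the minimum of
`f_λ(x) = x^q + (1-x)^q - λ(x^p + (1-x)^p)` on `[0,1/2]` is attained at a unique
point strictly between `0` and `1/2`. -/
theorem min_f_smooth_transition_interior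
    (p q lam : ℝ) (hq : 1 < q) (hqp : q < p) (hp : p < 2)
    (f : ℝ → ℝ)
    (hf : ∀ x, f x = x ^ q + (1 - x) ^ q - lam * (x ^ p + (1 - x) ^ p))
    (hlam1 : (q * (q - 1)) / (p * (p - 1)) * 2 ^ (p - q) < lam)
    (hlam2 : lam < q / p) :
    ∃ x₀ ∈ Ioo (0 : ℝ) (1/2),
      ∀ x ∈ Icc (0 : ℝ) (1/2), x ≠ x₀ → f x₀ < f x := by
  have hf' : ∀ x, HasDerivAt f (-(q * powGap (q - 1) x - lam * p * powGap (p - 1) x)) x := by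
    intro x
    rw [show f = fun x => (x ^ q + (1 - x) ^ q) - lam * (x ^ p + (1 - x) ^ p) from funext hf]
    exact ((hasDerivAt_rpow_add_rpow_one_sub hq.le x).sub
      ((hasDerivAt_rpow_add_rpow_one_sub (by linarith) x).const_mul lam)).congr_deriv (by ring)
  have h₀ : lam * p < q := (lt_div_iff₀ (by linarith)).1 hlam2
  have h_half : q * ((q - 1) * 2 ^ (2 - (q - 1))) < lam * p * ((p - 1) * 2 ^ (2 - (p - 1))) := by
    rw [div_mul_eq_mul_div, div_lt_iff₀ (by nlinarith)] at hlam1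
    calc q * ((q - 1) * 2 ^ (2 - (q - 1)))
        = q * (q - 1) * 2 ^ (p - q) * 2 ^ (2 - (p - 1)) := by
          rw [mul_assoc _ ((2 : ℝ) ^ _), ← rpow_add two_pos]; ring_nf
      _ < lam * (p * (p - 1)) * 2 ^ (2 - (p - 1)) := by gcongr
      _ = lam * p * ((p - 1) * 2 ^ (2 - (p - 1))) := by ring
  obtain ⟨x₀, hx₀, hx₀_zero⟩ :=
    exists_mul_powGap_eq_mul_powGap (by linarith) (by linarith) h₀ h_half
  have hsign := fun x (hx : x ∈ Ioo (0 : ℝ) (1 / 2)) =>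
    mul_powGap_sub_mul_powGap_pos_and_neg (by linarith) (by linarith) (by linarith)
      (by linarith) hx₀ hx hx₀_zero
  refine ⟨x₀, hx₀, fun x hx hne => lt_of_hasDerivAt_neg_of_pos (Ioo_subset_Icc_self hx₀)
    (fun y _ => (hf' y).continuousAt.continuousWithinAt) (fun y _ => hf' y) (fun y hy => ?_)
    (fun y hy => ?_) hx hne⟩
  · exact neg_neg_of_pos ((hsign y ⟨hy.1, hy.2.trans hx₀.2⟩).1 hy.2)
  · exact neg_pos_of_neg ((hsign y ⟨hx₀.1.trans hy.1, hy.2⟩).2 hy.1)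
end

section
/- Fix 1 ≤ s < d. There exist constants 0 < c1 ≤ c2 such that for all x > 0, c1 ≤ J(x) ≤ c2 · max(1, x^{−s/2}), where J(x) = ∫_{ℝ^d} |y|^{s−d} / (exp(x(|y|²/2 − 1)) + 1) dy. -/
/-!
In polar coordinates `J x = d |B₁| ∫₀^∞ r^(s-1) f_x(r) dr`, where
`f_x(r) = (exp (x (r²/2 - 1)) + 1)⁻¹` is a Fermi–Dirac weight. For `r ≤ 1` the weight is at
least `1/2`, which gives the lower bound. It is at most `1` for `r ≤ 2` and at most
`exp (-x r²/4)` for `r ≥ 2`, and the Gaussian moment `∫₀^∞ r^(s-1) exp (-x r²/4) dr` is a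
Gamma value times `x^(-s/2)`.
-/

open Real MeasureTheory Set Metric Module

noncomputable def fermiDirac (x r : ℝ) : ℝ := (exp (x * (r ^ 2 / 2 - 1)) + 1)⁻¹

lemma fermiDirac_nonneg (x r : ℝ) : 0 ≤ fermiDirac x r := by
  unfold fermiDirac; positivity

lemma fermiDirac_le_one (x r : ℝ) : fermiDirac x r ≤ 1 :=
  inv_le_one_of_one_le₀ (by linarith [exp_pos (x * (r ^ 2 / 2 - 1))])

lemma fermiDirac_le_exp_neg (x r : ℝ) : fermiDirac x r ≤ exp (-(x * (r ^ 2 / 2 - 1))) := by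
  rw [fermiDirac, exp_neg]
  exact inv_anti₀ (exp_pos _) (by linarith)

lemma half_le_fermiDirac {x r : ℝ} (hx : 0 ≤ x) (hr : r ^ 2 ≤ 2) :
    1 / 2 ≤ fermiDirac x r := by
  have : exp (x * (r ^ 2 / 2 - 1)) ≤ 1 :=
    exp_le_one_iff.2 (mul_nonpos_of_nonneg_of_nonpos hx (by linarith))
  rw [fermiDirac, one_div]
  exact inv_anti₀ (by positivity) (by linarith)

lemma fermiDirac_le_exp_neg_mul_sq {x r : ℝ} (hx : 0 ≤ x) (hr : 4 ≤ r ^ 2) :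
    fermiDirac x r ≤ exp (-(x / 4) * r ^ 2) :=
  (fermiDirac_le_exp_neg x r).trans (exp_le_exp.2 (by nlinarith))

lemma rpow_mul_fermiDirac_le {s x r : ℝ} (hx : 0 ≤ x) (hr : 0 < r) :
    r ^ (s - 1) * fermiDirac x r ≤
      (Ioc 0 2).indicator (· ^ (s - 1)) r + r ^ (s - 1) * exp (-(x / 4) * r ^ 2) := by
  have hpow : 0 ≤ r ^ (s - 1) := rpow_nonneg hr.le _
  by_cases h2 : r ≤ 2
  · rw [indicator_of_mem (show r ∈ Ioc 0 2 from ⟨hr, h2⟩)]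
    nlinarith [fermiDirac_le_one x r, exp_pos (-(x / 4) * r ^ 2)]
  · rw [indicator_of_notMem (fun h => h2 h.2), zero_add]
    exact mul_le_mul_of_nonneg_left (fermiDirac_le_exp_neg_mul_sq hx (by nlinarith)) hpow

lemma integrableOn_rpow_sub_one_Ioc {s : ℝ} (hs : 0 < s) (a : ℝ) :
    IntegrableOn (· ^ (s - 1)) (Ioc (0 : ℝ) a) := by
  rcases le_total 0 a with ha | ha
  · exact (intervalIntegrable_iff_integrableOn_Ioc_of_le ha).1
      (intervalIntegral.intervalIntegrable_rpow' (by linarith))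
  · simp [Ioc_eq_empty_of_le ha]

lemma integrable_indicator_Ioc_rpow_sub_one {s : ℝ} (hs : 0 < s) (a : ℝ) :
    Integrable ((Ioc 0 a).indicator (· ^ (s - 1))) :=
  (integrable_indicator_iff measurableSet_Ioc).2 (integrableOn_rpow_sub_one_Ioc hs a)

lemma integral_Ioc_rpow_sub_one {s a : ℝ} (hs : 0 < s) (ha : 0 ≤ a) :
    ∫ r in Ioc 0 a, r ^ (s - 1) = a ^ s / s := by
  rw [← intervalIntegral.integral_of_le ha, integral_rpow (Or.inl (by linarith))]
  simp [zero_rpow hs.ne']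

lemma integral_Ioi_rpow_mul_exp_neg_mul_sq {q b : ℝ} (hq : -1 < q) (hb : 0 < b) :
    ∫ r in Ioi 0, r ^ q * exp (-b * r ^ 2) =
      b ^ (-(q + 1) / 2) * (1 / 2) * Gamma ((q + 1) / 2) := by
  simpa only [rpow_two] using integral_rpow_mul_exp_neg_mul_rpow two_pos hq hb

noncomputable def fermiRadialIntegral (s x : ℝ) : ℝ :=
  ∫ r in Ioi 0, r ^ (s - 1) * fermiDirac x r

section FermiRadialIntegral

variable {s x : ℝ}

lemma integrableOn_rpow_mul_fermiDirac (hs : 0 < s) (hx : 0 < x) :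
    IntegrableOn (fun r => r ^ (s - 1) * fermiDirac x r) (Ioi 0) := by
  have hmajorant : IntegrableOn
      (fun r => (Ioc 0 2).indicator (· ^ (s - 1)) r + r ^ (s - 1) * exp (-(x / 4) * r ^ 2))
      (Ioi 0) :=
    (integrable_indicator_Ioc_rpow_sub_one hs 2).integrableOn.add
      (integrableOn_rpow_mul_exp_neg_mul_sq (by positivity) (by linarith))
  refine hmajorant.mono' (by unfold fermiDirac; fun_prop) ?_
  refine (ae_restrict_iff' measurableSet_Ioi).2 (.of_forall fun r (hr : 0 < r) => ?_)
  rw [norm_of_nonneg (mul_nonneg (rpow_nonneg hr.le _) (fermiDirac_nonneg x r))]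
  exact rpow_mul_fermiDirac_le hx.le hr

lemma one_div_two_mul_le_fermiRadialIntegral (hs : 0 < s) (hx : 0 < x) :
    1 / (2 * s) ≤ fermiRadialIntegral s x := by
  have hint := integrableOn_rpow_mul_fermiDirac hs hx
  calc 1 / (2 * s) = ∫ r in Ioc 0 1, r ^ (s - 1) / 2 := by
        rw [integral_div, integral_Ioc_rpow_sub_one hs zero_le_one]; field_simp; simp
    _ ≤ ∫ r in Ioc 0 1, r ^ (s - 1) * fermiDirac x r := by
        refine setIntegral_mono_on ((integrableOn_rpow_sub_one_Ioc hs 1).div_const 2)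
          (hint.mono_set Ioc_subset_Ioi_self) measurableSet_Ioc fun r hr => ?_
        rw [div_eq_mul_one_div]
        exact mul_le_mul_of_nonneg_left (half_le_fermiDirac hx.le (by nlinarith [hr.1, hr.2]))
          (rpow_nonneg hr.1.le _)
    _ ≤ fermiRadialIntegral s x :=
        setIntegral_mono_set hint
          ((ae_restrict_iff' measurableSet_Ioi).2 (.of_forall fun r (hr : 0 < r) =>
            mul_nonneg (rpow_nonneg hr.le _) (fermiDirac_nonneg x r)))
          Ioc_subset_Ioi_self.eventuallyLE

lemma fermiRadialIntegral_le (hs : 0 < s) (hx : 0 < x) :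
    fermiRadialIntegral s x ≤ 2 ^ s / s + 2 ^ s * Gamma (s / 2) / 2 * x ^ (-s / 2) := by
  have hind : IntegrableOn ((Ioc 0 2).indicator (· ^ (s - 1))) (Ioi (0 : ℝ)) :=
    (integrable_indicator_Ioc_rpow_sub_one hs 2).integrableOn
  have hgauss : IntegrableOn (fun r => r ^ (s - 1) * exp (-(x / 4) * r ^ 2)) (Ioi 0) :=
    integrableOn_rpow_mul_exp_neg_mul_sq (by positivity) (by linarith)
  have hscale : (x / 4) ^ (-s / 2) = 2 ^ s * x ^ (-s / 2) := by
    rw [div_rpow hx.le (by norm_num), show (4 : ℝ) = 2 ^ (2 : ℝ) by norm_num,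
      ← rpow_mul (by norm_num), show 2 * (-s / 2) = -s by ring, rpow_neg (by norm_num),
      div_inv_eq_mul, mul_comm]
  calc fermiRadialIntegral s x
      ≤ ∫ r in Ioi 0,
          ((Ioc 0 2).indicator (· ^ (s - 1)) r + r ^ (s - 1) * exp (-(x / 4) * r ^ 2)) :=
        setIntegral_mono_on (integrableOn_rpow_mul_fermiDirac hs hx) (hind.add hgauss)
          measurableSet_Ioi fun r hr => rpow_mul_fermiDirac_le hx.le hr
    _ = 2 ^ s / s + (x / 4) ^ (-s / 2) * (1 / 2) * Gamma (s / 2) := by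
        rw [integral_add hind hgauss, setIntegral_indicator measurableSet_Ioc,
          inter_eq_right.2 Ioc_subset_Ioi_self, integral_Ioc_rpow_sub_one hs zero_le_two,
          integral_Ioi_rpow_mul_exp_neg_mul_sq (by linarith) (by positivity)]
        ring_nf
    _ = 2 ^ s / s + 2 ^ s * Gamma (s / 2) / 2 * x ^ (-s / 2) := by rw [hscale]; ring

end FermiRadialIntegral

section Radial

variable {E : Type*} [NormedAddCommGroup E] [NormedSpace ℝ E] [FiniteDimensional ℝ E]
  [MeasurableSpace E] [BorelSpace E] [Nontrivial E] (μ : Measure E) [μ.IsAddHaarMeasure]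

lemma integral_norm_rpow_sub_finrank_mul (s : ℝ) (g : ℝ → ℝ) :
    ∫ y, ‖y‖ ^ (s - finrank ℝ E) * g ‖y‖ ∂μ =
      finrank ℝ E * μ.real (ball 0 1) * ∫ r in Ioi 0, r ^ (s - 1) * g r := by
  rw [integral_fun_norm_addHaar μ fun r => r ^ (s - finrank ℝ E) * g r, nsmul_eq_mul,
    smul_eq_mul, mul_assoc]
  congr 2
  refine setIntegral_congr_fun measurableSet_Ioi fun r (hr : 0 < r) => ?_
  rw [smul_eq_mul, ← mul_assoc, ← rpow_natCast, ← rpow_add hr,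
    Nat.cast_sub finrank_pos, Nat.cast_one]
  ring_nf

end Radial

lemma add_mul_le_add_mul_max_one {a b t : ℝ} (ha : 0 ≤ a) (hb : 0 ≤ b) :
    a + b * t ≤ (a + b) * max 1 t := by
  nlinarith [mul_nonneg ha (sub_nonneg.2 (le_max_left 1 t)),
    mul_nonneg hb (sub_nonneg.2 (le_max_right 1 t))]

theorem J_two_sided_bound_general
    (d : ℕ) (hd : 1 ≤ d) (s : ℝ) (hs1 : 1 ≤ s)
    (J : ℝ → ℝ)
    (hJ : ∀ x : ℝ, J x =
      ∫ y : EuclideanSpace ℝ (Fin d),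
        ‖y‖ ^ (s - d) / (Real.exp (x * (‖y‖ ^ 2 / 2 - 1)) + 1)) :
    ∃ c1 c2 : ℝ, 0 < c1 ∧ c1 ≤ c2 ∧
      ∀ x : ℝ, 0 < x → c1 ≤ J x ∧ J x ≤ c2 * max 1 (x ^ (-s / 2)) := by
  have : NeZero d := ⟨by omega⟩
  have hs : 0 < s := by linarith
  set K : ℝ := d * volume.real (ball (0 : EuclideanSpace ℝ (Fin d)) 1)
  have hK : 0 < K := mul_pos (by exact_mod_cast hd)
    (ENNReal.toReal_pos (measure_ball_pos _ _ one_pos).ne' measure_ball_lt_top.ne)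
  have hJK : ∀ x, J x = K * fermiRadialIntegral s x := fun x => by
    have := integral_norm_rpow_sub_finrank_mul (volume : Measure (EuclideanSpace ℝ (Fin d))) s
      (fermiDirac x)
    rw [finrank_euclideanSpace_fin] at this
    refine (hJ x).trans (Eq.trans ?_ this)
    simp only [fermiDirac, div_eq_mul_inv]
  set A : ℝ := 2 ^ s / s
  set B : ℝ := 2 ^ s * Gamma (s / 2) / 2
  have hA : 0 ≤ A := by positivity
  have hB : 0 ≤ B := by have := Gamma_pos_of_pos (half_pos hs); positivity
  have hbounds : ∀ x, 0 < x →
      K / (2 * s) ≤ J x ∧ J x ≤ K * (A + B) * max 1 (x ^ (-s / 2)) := by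
    intro x hx
    rw [hJK, div_eq_mul_one_div, mul_assoc K]
    refine ⟨mul_le_mul_of_nonneg_left (one_div_two_mul_le_fermiRadialIntegral hs hx) hK.le,
      mul_le_mul_of_nonneg_left ((fermiRadialIntegral_le hs hx).trans
        (add_mul_le_add_mul_max_one hA hB)) hK.le⟩
  refine ⟨K / (2 * s), K * (A + B), by positivity, ?_, hbounds⟩
  simpa using (hbounds 1 one_pos).1.trans (hbounds 1 one_pos).2

/-- For `1 ≤ s < d`, there are `0 < c1 ≤ c2` such that for all `x > 0`,
`c1 ≤ J(x) ≤ c2 · max(1, x^(-s/2))`, where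
`J(x) = ∫_{ℝ^d} |y|^(s-d)/(exp(x(|y|²/2 - 1)) + 1) dy`. -/
theorem J_two_sided_bound
    (d : ℕ) (hd : 1 ≤ d) (s : ℝ) (hs1 : 1 ≤ s) (hsd : s < d)
    (J : ℝ → ℝ)
    (hJ : ∀ x : ℝ, J x =
      ∫ y : EuclideanSpace ℝ (Fin d),
        ‖y‖ ^ (s - d) / (Real.exp (x * (‖y‖ ^ 2 / 2 - 1)) + 1)) :
    ∃ c1 c2 : ℝ, 0 < c1 ∧ c1 ≤ c2 ∧
      ∀ x : ℝ, 0 < x → c1 ≤ J x ∧ J x ≤ c2 * max 1 (x ^ (-s / 2)) :=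
  J_two_sided_bound_general d hd s hs1 J hJ
end

section
/- Let 0 < s < d and ρ > 0. Then the supremum of ‖(|·|^{s−d}) * g‖_{L^∞(ℝ^d)} over all measurable g with 0 ≤ g ≤ 1 and ∫_{ℝ^d} g = (2π)^d ρ equals (|S^{d−1}|/s) · c_TF^{s/2} · ρ^{s/d}, where c_TF = 4π² (d/|S^{d−1}|)^{2/d}, and the supremum is attained by the indicator function of the ball of radius c_TF^{1/2} ρ^{1/d}. -/
/-!
Bathtub principle: if `B` is the superlevel set `{w ≥ c}` of `w`, then
`(w - c) (g - 1_B) ≤ 0` pointwise, so `0 ≤ g ≤ 1` and `∫ g = |B|` give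
`∫ w g ≤ ∫_B w`.
After translating `k` to the origin, `w = |·|^(s-d)` is radially decreasing, so `B` is the
centred ball of volume `(2π)^d ρ`; `c_TF` is exactly the constant making its radius
`c_TF^(1/2) ρ^(1/d)`. Polar coordinates give `∫_{B_R} |y|^(s-d) dy = |S^(d-1)| R^s / s`.
-/

open Real MeasureTheory Set Metric

section Bathtub

variable {α : Type*} [MeasurableSpace α] {μ : Measure α} {w g : α → ℝ} {B : Set α}
  {c : ℝ}

theorem bathtub_integral_mul_le_setIntegral (hB : MeasurableSet B) (hBfin : μ B ≠ ⊤)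
    (hc : 0 ≤ c) (hw_in : ∀ᵐ y ∂μ, y ∈ B → c ≤ w y)
    (hw_out : ∀ᵐ y ∂μ, y ∉ B → w y ≤ c)
    (hwB : IntegrableOn w B μ) (hg : ∀ y, 0 ≤ g y ∧ g y ≤ 1) (hg_int : Integrable g μ)
    (hg_mass : ∫ y, g y ∂μ = μ.real B) :
    ∫ y, w y * g y ∂μ ≤ ∫ y in B, w y ∂μ := by
  by_cases hwg : Integrable (fun y => w y * g y) μ
  swap
  · rw [integral_undef hwg]
    exact setIntegral_nonneg_ae hB <| by
      filter_upwards [hw_in] with y hy hyB using hc.trans (hy hyB)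
  have h1B : Integrable (B.indicator (1 : α → ℝ)) μ :=
    (integrable_indicator_iff hB).2 (integrableOn_const hBfin)
  -- a rearrangement of `(w - c) (g - 1_B) ≤ 0`
  have hpointwise : ∀ᵐ y ∂μ,
      w y * g y ≤ B.indicator w y + c * (g y - B.indicator 1 y) := by
    filter_upwards [hw_in, hw_out] with y hy_in hy_out
    by_cases hyB : y ∈ B
    · simp only [indicator_of_mem hyB, Pi.one_apply]
      nlinarith [hy_in hyB, hg y]
    · simp only [indicator_of_notMem hyB]
      nlinarith [hy_out hyB, hg y]
  have hwB' : Integrable (B.indicator w) μ := (integrable_indicator_iff hB).2 hwB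
  have hdefect : Integrable (fun y => c * (g y - B.indicator 1 y)) μ :=
    (hg_int.sub h1B).const_mul c
  calc ∫ y, w y * g y ∂μ
      ≤ ∫ y, (B.indicator w y + c * (g y - B.indicator 1 y)) ∂μ :=
        integral_mono_ae hwg (hwB'.add hdefect) hpointwise
    _ = ∫ y in B, w y ∂μ := by
        rw [integral_add hwB' hdefect, integral_const_mul, integral_sub hg_int h1B,
          integral_indicator hB, integral_indicator_one hB, hg_mass, sub_self, mul_zero,
          add_zero]

end Bathtub

section RadialPower

variable {E : Type*} [NormedAddCommGroup E] [NormedSpace ℝ E] [FiniteDimensional ℝ E]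
  [MeasurableSpace E] [BorelSpace E] [Nontrivial E] (μ : Measure E) [μ.IsAddHaarMeasure]

theorem integral_ball_norm_rpow {t R : ℝ}
    (ht : -(Module.finrank ℝ E : ℝ) < t) (hR : 0 ≤ R) :
    ∫ y in ball (0 : E) R, ‖y‖ ^ t ∂μ =
      Module.finrank ℝ E * μ.real (ball 0 1) *
        (R ^ (t + Module.finrank ℝ E) / (t + Module.finrank ℝ E)) := by
  set n := Module.finrank ℝ E
  have hn : 0 < n := Module.finrank_pos
  have htn : 0 < t + n := by linarith
  have hradial : ∫ r in Ioi (0 : ℝ), r ^ (n - 1) • (Iio R).indicator (· ^ t) r =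
      R ^ (t + n) / (t + n) := by
    calc ∫ r in Ioi (0 : ℝ), r ^ (n - 1) • (Iio R).indicator (· ^ t) r
        = ∫ r in Ioo (0 : ℝ) R, r ^ (t + n - 1) := by
          rw [← Ioi_inter_Iio, ← setIntegral_indicator measurableSet_Iio]
          refine setIntegral_congr_fun measurableSet_Ioi fun r (hr : 0 < r) => ?_
          by_cases hrR : r < R
          · simp only [indicator_of_mem (show r ∈ Iio R from hrR), smul_eq_mul]
            rw [← rpow_natCast, ← rpow_add hr, Nat.cast_sub hn]
            ring_nf
          · simp [hrR]
      _ = R ^ (t + n) / (t + n) := by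
          rw [← integral_Ioc_eq_integral_Ioo, ← intervalIntegral.integral_of_le hR,
            integral_rpow (.inl (by linarith)), sub_add_cancel, zero_rpow htn.ne', sub_zero]
  have hball : (fun y : E => (ball (0 : E) R).indicator (‖·‖ ^ t) y) =
      fun y => (Iio R).indicator (· ^ t) ‖y‖ := by
    ext y
    by_cases hy : ‖y‖ < R <;> simp [indicator, hy]
  rw [← integral_indicator measurableSet_ball, hball, integral_fun_norm_addHaar μ, hradial,
    nsmul_eq_mul, smul_eq_mul, mul_assoc]

theorem integral_norm_sub_rpow_mul_le_setIntegral_ball (k : E) {t R : ℝ}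
    (ht : -(Module.finrank ℝ E : ℝ) < t) (ht0 : t ≤ 0) (hR : 0 < R) {g : E → ℝ}
    (hg : ∀ y, 0 ≤ g y ∧ g y ≤ 1) (hg_int : Integrable g μ)
    (hg_mass : ∫ y, g y ∂μ = μ.real (ball 0 R)) :
    ∫ y, ‖k - y‖ ^ t * g y ∂μ ≤ ∫ y in ball 0 R, ‖y‖ ^ t ∂μ := by
  have hint : IntegrableOn (fun y : E => ‖y‖ ^ t) (ball 0 R) μ :=
    integrableOn_ball_of_norm_le_rpow (C := 1) (α := -t) Module.finrank_pos (by linarith)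
      (ae_of_all _ fun y => by simp [abs_of_nonneg (rpow_nonneg (norm_nonneg y) t)])
      (measurable_norm.pow_const t).aestronglyMeasurable
  have hw_in : ∀ᵐ y ∂μ, y ∈ ball 0 R → R ^ t ≤ ‖y‖ ^ t := by
    filter_upwards [compl_mem_ae_iff.2 (measure_singleton (0 : E))] with y hy hyR
    exact rpow_le_rpow_of_nonpos (norm_pos_iff.2 hy) (mem_ball_zero_iff.1 hyR).le ht0
  have hw_out : ∀ y, y ∉ ball (0 : E) R → ‖y‖ ^ t ≤ R ^ t := fun y hyR =>
    rpow_le_rpow_of_nonpos hR (not_lt.1 (mt mem_ball_zero_iff.2 hyR)) ht0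
  rw [← integral_sub_left_eq_self _ μ k]
  simp_rw [sub_sub_cancel]
  exact bathtub_integral_mul_le_setIntegral measurableSet_ball measure_ball_lt_top.ne
    (rpow_nonneg hR.le t) hw_in (ae_of_all _ hw_out) hint (fun y => hg (k - y))
    (hg_int.comp_sub_left k) (by rw [integral_sub_left_eq_self (g ·), hg_mass])

end RadialPower

theorem thomasFermi_radius_pow_mul {d : ℕ} (hd : d ≠ 0) {ω ρ : ℝ} (hω : 0 < ω)
    (hρ : 0 ≤ ρ) :
    ((4 * π ^ 2 * (d / (d * ω)) ^ ((2 : ℝ) / d)) ^ ((1 : ℝ) / 2) * ρ ^ ((1 : ℝ) / d)) ^ d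
      * ω = (2 * π) ^ d * ρ := by
  have hd' : (d : ℝ) ≠ 0 := Nat.cast_ne_zero.2 hd
  rw [div_mul_cancel_left₀ hd', show (4 : ℝ) * π ^ 2 = (2 * π) ^ (2 : ℝ) by norm_num; ring,
    mul_rpow (by positivity) (by positivity), ← rpow_mul (by positivity),
    ← rpow_mul (by positivity), mul_pow, mul_pow, ← rpow_mul_natCast (by positivity),
    ← rpow_mul_natCast (by positivity), ← rpow_mul_natCast hρ]
  field_simp
  simp [hω.ne']

theorem sup_convolution_riesz_general
    (d : ℕ) (s ρ : ℝ) (hs0 : 0 < s) (hsd : s < d) (hρ : 0 < ρ)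
    (Sd cTF : ℝ)
    (hSd : Sd = d * (volume (Metric.ball (0 : EuclideanSpace ℝ (Fin d)) 1)).toReal)
    (hcTF : cTF = 4 * π ^ 2 * (d / Sd) ^ ((2 : ℝ) / d)) :
    (∀ g : EuclideanSpace ℝ (Fin d) → ℝ, Measurable g →
      (∀ y, 0 ≤ g y ∧ g y ≤ 1) →
      (∫ y, g y) = (2 * π) ^ d * ρ →
      ∀ k : EuclideanSpace ℝ (Fin d),
        (∫ y, ‖k - y‖ ^ (s - d) * g y) ≤ Sd / s * cTF ^ (s / 2) * ρ ^ (s / d)) ∧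
    (∫ y in Metric.ball (0 : EuclideanSpace ℝ (Fin d)) (cTF ^ ((1 : ℝ)/2) * ρ ^ ((1 : ℝ)/d)),
        ‖y‖ ^ (s - d)) = Sd / s * cTF ^ (s / 2) * ρ ^ (s / d) := by
  have hd : 0 < d := by exact_mod_cast hs0.trans hsd
  have hdim : Module.finrank ℝ (EuclideanSpace ℝ (Fin d)) = d := finrank_euclideanSpace_fin
  have : Nontrivial (EuclideanSpace ℝ (Fin d)) :=
    Module.nontrivial_of_finrank_pos (R := ℝ) (by rw [hdim]; exact hd)
  have hω : 0 < (volume (ball (0 : EuclideanSpace ℝ (Fin d)) 1)).toReal :=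
    ENNReal.toReal_pos (measure_ball_pos _ _ one_pos).ne' measure_ball_lt_top.ne
  have hcTF_pos : 0 < cTF := by rw [hcTF, hSd]; positivity
  set R := cTF ^ ((1 : ℝ) / 2) * ρ ^ ((1 : ℝ) / d) with hR_def
  have hR : 0 < R := mul_pos (rpow_pos_of_pos hcTF_pos _) (rpow_pos_of_pos hρ _)
  have hvol : volume.real (ball (0 : EuclideanSpace ℝ (Fin d)) R) = (2 * π) ^ d * ρ := by
    rw [measureReal_def, Measure.addHaar_ball volume _ hR.le, ENNReal.toReal_mul,
      ENNReal.toReal_ofReal (by positivity), hdim, hR_def, hcTF, hSd,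
      thomasFermi_radius_pow_mul hd.ne' hω hρ.le]
  have hRs : R ^ s = cTF ^ (s / 2) * ρ ^ (s / d) := by
    rw [mul_rpow (by positivity) (by positivity), ← rpow_mul hcTF_pos.le,
      ← rpow_mul hρ.le, one_div_mul_eq_div, one_div_mul_eq_div]
  have hball : ∫ y in ball (0 : EuclideanSpace ℝ (Fin d)) R, ‖y‖ ^ (s - d) =
      Sd / s * cTF ^ (s / 2) * ρ ^ (s / d) := by
    rw [integral_ball_norm_rpow volume (by rw [hdim]; linarith) hR.le, hdim, sub_add_cancel,
      hRs, hSd, measureReal_def]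
    ring
  refine ⟨fun g _ hg hg_mass k => ?_, hball⟩
  rw [← hball]
  exact integral_norm_sub_rpow_mul_le_setIntegral_ball volume k (by rw [hdim]; linarith)
    (by linarith) hR hg (.of_integral_ne_zero (by rw [hg_mass]; positivity))
    (hg_mass.trans hvol.symm)

/-- Lemma (estimate on `w * g`): for `0 < s < d` and `ρ > 0`, the supremum of
`‖|·|^(s-d) * g‖_{L^∞}` over measurable `0 ≤ g ≤ 1` with `∫ g = (2π)^d ρ` equals
`(|S^(d-1)|/s) c_TF^(s/2) ρ^(s/d)` with `c_TF = 4π²(d/|S^(d-1)|)^(2/d)`, and is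
attained by the indicator of the ball of radius `c_TF^(1/2) ρ^(1/d)` (at the
point `k = 0`). Here `|S^(d-1)| = d · vol(B(0,1))`. -/
theorem sup_convolution_riesz
    (d : ℕ) (hd : 1 ≤ d) (s ρ : ℝ) (hs0 : 0 < s) (hsd : s < d) (hρ : 0 < ρ)
    (Sd cTF : ℝ)
    (hSd : Sd = d * (volume (Metric.ball (0 : EuclideanSpace ℝ (Fin d)) 1)).toReal)
    (hcTF : cTF = 4 * π ^ 2 * (d / Sd) ^ ((2 : ℝ) / d)) :
    (∀ g : EuclideanSpace ℝ (Fin d) → ℝ, Measurable g →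
      (∀ y, 0 ≤ g y ∧ g y ≤ 1) →
      (∫ y, g y) = (2 * π) ^ d * ρ →
      ∀ k : EuclideanSpace ℝ (Fin d),
        (∫ y, ‖k - y‖ ^ (s - d) * g y) ≤ Sd / s * cTF ^ (s / 2) * ρ ^ (s / d)) ∧
    (∫ y in Metric.ball (0 : EuclideanSpace ℝ (Fin d)) (cTF ^ ((1 : ℝ)/2) * ρ ^ ((1 : ℝ)/d)),
        ‖y‖ ^ (s - d)) = Sd / s * cTF ^ (s / 2) * ρ ^ (s / d) :=
  sup_convolution_riesz_general d s ρ hs0 hsd hρ Sd cTF hSd hcTF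
end

section
/- For all x, y ∈ (0,1), x·log(x/y) + (1−x)·log((1−x)/(1−y)) ≥ ((x−y)²/(2y−1))·log(y/(1−y)), where for y = 1/2 the right-hand side is interpreted as its limit 2(x−y)². -/
open Real Set

/-!
Put `u = 2t - 1`. Then `log (t / (1 - t)) = log (1 + u) - log (1 - u) = 2u S(u²)` with
`S w = ∑ wᵏ / (2k + 1)`, which is increasing on `[0, 1)` and satisfies `S 0 = 1`; so the constant
of the bound is `c = 2 S((2y - 1)²)` for every `y`, including `y = 1/2`. The gap
`f t = H(t|y) - c (t - y)²` has derivative `2 (2t - 1) (S((2t - 1)²) - S((2y - 1)²))`, hence on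
`[1/2, 1)` it decreases up to `a = max y (1 - y)` and increases afterwards, and `f a = 0` both for
`a = y` and for `a = 1 - y`. The symmetry `H(1 - x|1 - y) = H(x|y)` covers `x < 1/2`.
-/

noncomputable def logit (t : ℝ) : ℝ := log (t / (1 - t))

noncomputable def binRelEntropy (x y : ℝ) : ℝ :=
  x * log (x / y) + (1 - x) * log ((1 - x) / (1 - y))

/-- `artanh √w / √w` for `0 < w < 1`, as a power series in `w`. -/
noncomputable def artanhDivSeries (w : ℝ) : ℝ := ∑' k : ℕ, w ^ k / (2 * k + 1)

lemma summable_artanhDivSeries {w : ℝ} (hw0 : 0 ≤ w) (hw1 : w < 1) :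
    Summable fun k : ℕ => w ^ k / (2 * k + 1) :=
  (summable_geometric_of_lt_one hw0 hw1).of_nonneg_of_le (fun _ => by positivity)
    fun k => div_le_self (by positivity) (by linarith [k.cast_nonneg (α := ℝ)])

lemma artanhDivSeries_zero : artanhDivSeries 0 = 1 := by
  rw [artanhDivSeries, tsum_eq_single 0 fun k hk => by simp [hk]]
  norm_num

lemma artanhDivSeries_monotoneOn : MonotoneOn artanhDivSeries (Ico 0 1) := fun v hv w hw hvw =>
  (summable_artanhDivSeries hv.1 hv.2).tsum_le_tsum (fun k => by gcongr; exact hv.1)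
    (summable_artanhDivSeries hw.1 hw.2)

lemma log_one_add_sub_log_one_sub {u : ℝ} (hu : |u| < 1) :
    log (1 + u) - log (1 - u) = 2 * u * artanhDivSeries (u ^ 2) := by
  have hs := summable_artanhDivSeries (sq_nonneg u) (by nlinarith [abs_nonneg u, sq_abs u])
  rw [← (hasSum_log_sub_log_of_abs_lt_one hu).tsum_eq, artanhDivSeries, ← hs.tsum_mul_left]
  congr 1 with k
  rw [← pow_mul]
  ring

lemma logit_eq_mul_artanhDivSeries {t : ℝ} (ht : t ∈ Ioo 0 1) :
    logit t = 2 * (2 * t - 1) * artanhDivSeries ((2 * t - 1) ^ 2) := by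
  obtain ⟨ht0, ht1⟩ := ht
  rw [← log_one_add_sub_log_one_sub (abs_lt.2 ⟨by linarith, by linarith⟩), logit,
    ← log_div (by linarith) (by linarith)]
  congr 1
  rw [div_eq_div_iff (by linarith) (by linarith)]
  ring

lemma binRelEntropy_one_sub (x y : ℝ) : binRelEntropy (1 - x) (1 - y) = binRelEntropy x y := by
  simp only [binRelEntropy, sub_sub_cancel]
  ring

lemma binRelEntropy_self (y : ℝ) : binRelEntropy y y = 0 := by
  simp [binRelEntropy]

lemma binRelEntropy_one_sub_self (y : ℝ) : binRelEntropy (1 - y) y = (2 * y - 1) * logit y := by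
  rw [binRelEntropy, sub_sub_cancel, logit, ← inv_div, log_inv]
  ring

lemma hasDerivAt_binRelEntropy {t y : ℝ} (ht : t ∈ Ioo 0 1) (hy : y ∈ Ioo 0 1) :
    HasDerivAt (fun s => binRelEntropy s y) (logit t - logit y) t := by
  obtain ⟨ht0, ht1⟩ := ht
  obtain ⟨hy0, hy1⟩ := hy
  have hleft := (hasDerivAt_id' t).mul (((hasDerivAt_id' t).div_const y).log
    (div_ne_zero ht0.ne' hy0.ne'))
  have hright := ((hasDerivAt_id' t).const_sub 1).mul ((((hasDerivAt_id' t).const_sub 1).div_const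
    (1 - y)).log (div_ne_zero (by linarith) (by linarith)))
  refine (hleft.add hright).congr_deriv ?_
  rw [logit, logit]
  have ht' : 1 - t ≠ 0 := by linarith
  have hy' : 1 - y ≠ 0 := by linarith
  rw [log_div ht0.ne' hy0.ne', log_div ht' hy', log_div ht0.ne' ht', log_div hy0.ne' hy']
  field_simp
  ring

lemma isMinOn_of_hasDerivAt_sign {f f' : ℝ → ℝ} {I : Set ℝ} [I.OrdConnected] {a : ℝ}
    (ha : a ∈ I) (hf : ∀ t ∈ I, HasDerivAt f (f' t) t) (hneg : ∀ t ∈ I, t < a → f' t ≤ 0)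
    (hpos : ∀ t ∈ I, a < t → 0 ≤ f' t) : IsMinOn f I a := by
  refine isMinOn_iff.2 fun x hx => ?_
  have hsub {l r : ℝ} (hl : l ∈ I) (hr : r ∈ I) : Icc l r ⊆ I := Set.Icc_subset I hl hr
  have hcont {l r : ℝ} (hl : l ∈ I) (hr : r ∈ I) : ContinuousOn f (Icc l r) := fun t ht =>
    (hf t (hsub hl hr ht)).continuousAt.continuousWithinAt
  rcases le_total x a with hxa | hax
  · refine antitoneOn_of_hasDerivWithinAt_nonpos (f' := f') (convex_Icc x a) (hcont hx ha)
      (fun t ht => ?_) (fun t ht => ?_) ⟨le_rfl, hxa⟩ ⟨hxa, le_rfl⟩ hxa <;> rw [interior_Icc] at ht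
    · exact (hf t (hsub hx ha (Ioo_subset_Icc_self ht))).hasDerivWithinAt
    · exact hneg t (hsub hx ha (Ioo_subset_Icc_self ht)) ht.2
  · refine monotoneOn_of_hasDerivWithinAt_nonneg (f' := f') (convex_Icc a x) (hcont ha hx)
      (fun t ht => ?_) (fun t ht => ?_) ⟨le_rfl, hax⟩ ⟨hax, le_rfl⟩ hax <;> rw [interior_Icc] at ht
    · exact (hf t (hsub ha hx (Ioo_subset_Icc_self ht))).hasDerivWithinAt
    · exact hpos t (hsub ha hx (Ioo_subset_Icc_self ht)) ht.1

lemma mul_sq_sub_le_binRelEntropy_of_half_le {x y : ℝ} (hx : x ∈ Ico (1 / 2) 1) (hy : y ∈ Ioo 0 1) :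
    2 * artanhDivSeries ((2 * y - 1) ^ 2) * (x - y) ^ 2 ≤ binRelEntropy x y := by
  set c := 2 * artanhDivSeries ((2 * y - 1) ^ 2)
  obtain ⟨a, ha, hay⟩ : ∃ a ∈ Ico (1 / 2) 1, a = y ∨ a = 1 - y :=
    ⟨max y (1 - y), ⟨by grind, max_lt hy.2 (by linarith [hy.1])⟩, max_choice y (1 - y)⟩
  have hfa : binRelEntropy a y - c * (a - y) ^ 2 = 0 := by
    rcases hay with rfl | rfl
    · simp [binRelEntropy_self]
    · rw [binRelEntropy_one_sub_self, logit_eq_mul_artanhDivSeries hy]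
      ring
  replace hay : (2 * a - 1) ^ 2 = (2 * y - 1) ^ 2 := by
    rcases hay with rfl | rfl <;> ring
  have hsq {t : ℝ} (ht : t ∈ Ico (1 / 2) 1) : (2 * t - 1) ^ 2 ∈ Ico 0 1 :=
    ⟨sq_nonneg _, by nlinarith [ht.1, ht.2]⟩
  have hderiv : ∀ t ∈ Ico (1 / 2) 1, HasDerivAt (fun s => binRelEntropy s y - c * (s - y) ^ 2)
      (2 * (2 * t - 1) * (artanhDivSeries ((2 * t - 1) ^ 2) - artanhDivSeries ((2 * a - 1) ^ 2)))
      t := by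
    intro t ht
    refine ((hasDerivAt_binRelEntropy ⟨by linarith [ht.1], ht.2⟩ hy).sub
      (((hasDerivAt_id' t).sub_const y).pow 2 |>.const_mul c)).congr_deriv ?_
    rw [logit_eq_mul_artanhDivSeries ⟨by linarith [ht.1], ht.2⟩, logit_eq_mul_artanhDivSeries hy,
      hay]
    ring
  have hmin := isMinOn_of_hasDerivAt_sign ha hderiv
    (fun t ht hta => mul_nonpos_of_nonneg_of_nonpos (by linarith [ht.1]) (sub_nonpos.2
      (artanhDivSeries_monotoneOn (hsq ht) (hsq ha) (by nlinarith [ht.1]))))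
    (fun t ht hat => mul_nonneg (by linarith [ht.1]) (sub_nonneg.2
      (artanhDivSeries_monotoneOn (hsq ha) (hsq ht) (by nlinarith [ha.1]))))
  linarith [isMinOn_iff.1 hmin x hx]

lemma mul_sq_sub_le_binRelEntropy {x y : ℝ} (hx : x ∈ Ioo 0 1) (hy : y ∈ Ioo 0 1) :
    2 * artanhDivSeries ((2 * y - 1) ^ 2) * (x - y) ^ 2 ≤ binRelEntropy x y := by
  rcases le_or_gt (1 / 2) x with hx2 | hx2
  · exact mul_sq_sub_le_binRelEntropy_of_half_le ⟨hx2, hx.2⟩ hy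
  · have h := mul_sq_sub_le_binRelEntropy_of_half_le (x := 1 - x) (y := 1 - y)
      ⟨by linarith, by linarith [hx.1]⟩ ⟨by linarith [hy.2], by linarith [hy.1]⟩
    rwa [binRelEntropy_one_sub, show 2 * (1 - y) - 1 = -(2 * y - 1) by ring,
      show 1 - x - (1 - y) = -(x - y) by ring, neg_sq, neg_sq] at h

/-- Quantitative lower bound on the binary relative entropy: for `x, y ∈ (0,1)`,
`x log(x/y) + (1-x) log((1-x)/(1-y)) ≥ ((x-y)²/(2y-1)) log(y/(1-y))`,
the right-hand side being interpreted as `2(x-y)²` when `y = 1/2`. -/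
theorem relative_entropy_lower_bound
    (x y : ℝ) (hx : x ∈ Ioo (0 : ℝ) 1) (hy : y ∈ Ioo (0 : ℝ) 1) :
    (y ≠ 1/2 →
      (x - y) ^ 2 / (2 * y - 1) * Real.log (y / (1 - y)) ≤
        x * Real.log (x / y) + (1 - x) * Real.log ((1 - x) / (1 - y))) ∧
    (y = 1/2 →
      2 * (x - y) ^ 2 ≤
        x * Real.log (x / y) + (1 - x) * Real.log ((1 - x) / (1 - y))) := by
  have key := mul_sq_sub_le_binRelEntropy hx hy
  rw [binRelEntropy] at key
  refine ⟨fun hy2 => ?_, fun hy2 => ?_⟩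
  · have h2y : 2 * y - 1 ≠ 0 := fun h => hy2 (by linarith)
    calc (x - y) ^ 2 / (2 * y - 1) * log (y / (1 - y))
        = 2 * artanhDivSeries ((2 * y - 1) ^ 2) * (x - y) ^ 2 := by
          rw [← logit, logit_eq_mul_artanhDivSeries hy, div_mul_eq_mul_div, div_eq_iff h2y]
          ring
      _ ≤ _ := key
  · subst hy2
    simpa [artanhDivSeries_zero] using key
end

section
/- For all real x, x / tanh(x/2) ≥ max(2, |x|), and in particular x / tanh(x/2) ≥ 1 + |x|/2 (with the value at x = 0 interpreted as the limit 2). -/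
/-- For `t > 0`, `sinh t ≤ t * cosh t`. -/
lemma sinh_le_mul_cosh {t : ℝ} (ht : 0 < t) : Real.sinh t ≤ t * Real.cosh t := by
  have hmono : MonotoneOn (fun s : ℝ => s * Real.cosh s - Real.sinh s) (Set.Ici 0) := by
    apply monotoneOn_of_deriv_nonneg (convex_Ici 0)
    · exact (Continuous.sub (continuous_id.mul Real.continuous_cosh)
        Real.continuous_sinh).continuousOn
    · intro s hs
      exact (((differentiable_id.mul Real.differentiable_cosh).sub
        Real.differentiable_sinh).differentiableOn) s hs
    · intro s hs
      have hd : HasDerivAt (fun s : ℝ => s * Real.cosh s - Real.sinh s)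
          (1 * Real.cosh s + s * Real.sinh s - Real.cosh s) s :=
        ((hasDerivAt_id s).mul (Real.hasDerivAt_cosh s)).sub (Real.hasDerivAt_sinh s)
      rw [hd.deriv]
      have hs0 : 0 < s := by simpa using hs
      have := Real.sinh_pos_iff.2 hs0
      nlinarith
  have h0 : (0:ℝ) ∈ Set.Ici (0:ℝ) := Set.self_mem_Ici
  have ht' : t ∈ Set.Ici (0:ℝ) := le_of_lt ht
  have := hmono h0 ht' ht.le
  simpa using this

/-- For `t > 0`, `2 ≤ (2*t) / tanh t` and `2*t ≤ (2*t)/tanh t`. -/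
lemma key {t : ℝ} (ht : 0 < t) :
    max 2 (2 * t) ≤ (2 * t) / Real.tanh t := by
  have hsinh : 0 < Real.sinh t := Real.sinh_pos_iff.2 ht
  have hcosh : 0 < Real.cosh t := Real.cosh_pos t
  have htanh : 0 < Real.tanh t := by
    rw [Real.tanh_eq_sinh_div_cosh]; positivity
  have htanh1 : Real.tanh t < 1 := by
    rw [Real.tanh_eq_sinh_div_cosh, div_lt_one hcosh]
    exact Real.sinh_lt_cosh t
  have htanht : Real.tanh t ≤ t := by
    rw [Real.tanh_eq_sinh_div_cosh, div_le_iff₀ hcosh]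
    exact sinh_le_mul_cosh ht
  apply max_le
  · rw [le_div_iff₀ htanh]; linarith
  · rw [le_div_iff₀ htanh]; nlinarith

/-- For all real `x ≠ 0`, `x / tanh(x/2) ≥ max(2, |x|)`, and in particular
`x / tanh(x/2) ≥ 1 + |x|/2` (at `x = 0` the function is interpreted as its
limit `2`, for which both bounds hold trivially). -/
theorem div_tanh_ge (x : ℝ) (hx : x ≠ 0) :
    max 2 |x| ≤ x / Real.tanh (x / 2) ∧ 1 + |x| / 2 ≤ x / Real.tanh (x / 2) := by
  have main : max 2 |x| ≤ x / Real.tanh (x / 2) := by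
    rcases lt_or_gt_of_ne hx with hneg | hpos
    · have ht : 0 < -x / 2 := by linarith
      have := key ht
      have hx2 : 2 * (-x / 2) = -x := by ring
      rw [hx2] at this
      have habs : |x| = -x := abs_of_neg hneg
      have : max 2 (-x) ≤ (-x) / Real.tanh (-x / 2) := this
      rw [show (-x/2 : ℝ) = -(x/2) by ring, Real.tanh_neg, div_neg, neg_div, neg_neg] at this
      rw [habs]
      exact this
    · have ht : 0 < x / 2 := by linarith
      have := key ht
      have hx2 : 2 * (x / 2) = x := by ring
      rw [hx2] at this
      rwa [abs_of_pos hpos]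
  refine ⟨main, ?_⟩
  refine le_trans ?_ main
  rcases le_total |x| 2 with h | h
  · calc 1 + |x| / 2 ≤ 2 := by linarith
      _ ≤ max 2 |x| := le_max_left _ _
  · calc 1 + |x| / 2 ≤ |x| := by linarith
      _ ≤ max 2 |x| := le_max_right _ _
end

section
/- Let d ≥ 2. There exists a constant C > 0 such that for all λ ∈ (0,1), sup over ℓ ∈ ℝ^d of ∫_{S^{d−1}} (|ℓ − ω|² + λ²)^{−(d−1)/2} dσ(ω) ≤ C(1 + log(1/λ)), where dσ is the surface measure on the unit sphere S^{d−1} ⊂ ℝ^d. -/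
/-!
Layer cake. If `t < (‖ℓ - ω‖² + λ²)^(-(d-1)/2)` then `‖ℓ - ω‖ < t^(-1/(d-1))`, so the superlevel
set at height `t` lies in a spherical cap of radius `2 t^(-1/(d-1))` around a point of the sphere.
The cone over a cap of radius `r` fits in a box of volume `2 (2r)^(d-1)`, so the superlevel set
has measure `O(1/t)`. It is empty above `λ^(-(d-1))`, so integrating over `t` gives
`σ(S^(d-1)) + O(log λ^(-(d-1)))`.
-/

open Real MeasureTheory Set Metric Pointwise
open scoped ENNReal InnerProductSpace

theorem abs_lt_rpow_of_lt_rpow_sq_add_sq {q t a b : ℝ} (hq : 0 < q) (ht : 0 < t)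
    (h : t < (a ^ 2 + b ^ 2) ^ (-q / 2)) : |a| < t ^ (-1 / q) := by
  have hX : 0 < a ^ 2 + b ^ 2 := by
    refine (add_nonneg (sq_nonneg a) (sq_nonneg b)).lt_of_ne fun hX => ?_
    rw [← hX, zero_rpow (by linarith [hq])] at h
    exact ht.not_gt h
  calc |a| ≤ √(a ^ 2 + b ^ 2) := abs_le_sqrt (by nlinarith)
    _ = ((a ^ 2 + b ^ 2) ^ (-q / 2)) ^ (-1 / q) := by
        rw [sqrt_eq_rpow, ← rpow_mul hX.le]; congr 1; field_simp
    _ < t ^ (-1 / q) := rpow_lt_rpow_of_neg ht h (div_neg_of_neg_of_pos (by norm_num) hq)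

theorem rpow_sq_add_sq_le_rpow {q a b : ℝ} (hq : 0 ≤ q) (hb : 0 < b) :
    (a ^ 2 + b ^ 2) ^ (-q / 2) ≤ b ^ (-q) := by
  calc (a ^ 2 + b ^ 2) ^ (-q / 2) ≤ (b ^ 2) ^ (-q / 2) :=
        rpow_le_rpow_of_nonpos (by positivity) (by nlinarith) (by linarith)
    _ = b ^ (-q) := by rw [← rpow_two, ← rpow_mul hb.le]; ring_nf

theorem setLIntegral_Ioc_ofReal_div {A T : ℝ} (hA : 0 ≤ A) (hT : 1 ≤ T) :
    ∫⁻ t in Ioc 1 T, ENNReal.ofReal (A / t) = ENNReal.ofReal (A * log T) := by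
  have hcont : ContinuousOn (fun t => A / t) (Icc 1 T) :=
    continuousOn_const.div continuousOn_id fun t ht => (zero_lt_one.trans_le ht.1).ne'
  have hint : IntegrableOn (fun t => A / t) (Ioc 1 T) :=
    hcont.integrableOn_Icc.mono_set Ioc_subset_Icc_self
  rw [← ofReal_integral_eq_lintegral_ofReal hint, ← intervalIntegral.integral_of_le hT]
  · simp_rw [div_eq_mul_inv A]
    rw [intervalIntegral.integral_const_mul, integral_inv_of_pos one_pos (by linarith), div_one]
  · filter_upwards [ae_restrict_mem measurableSet_Ioc] with t ht
    exact div_nonneg hA (zero_le_one.trans ht.1.le)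

theorem integral_le_measureReal_univ_add_mul_log {α : Type*} [MeasurableSpace α]
    {μ : Measure α} [IsFiniteMeasure μ] {g : α → ℝ} (hg : AEMeasurable g μ) (hg0 : ∀ x, 0 ≤ g x)
    {A T : ℝ} (hA : 0 ≤ A) (hT : 1 ≤ T) (hgT : ∀ x, g x ≤ T)
    (hlevel : ∀ t, 1 < t → μ {x | t < g x} ≤ ENNReal.ofReal (A / t)) :
    ∫ x, g x ∂μ ≤ μ.real univ + A * log T := by
  have hcover : Ioi (0 : ℝ) ⊆ (Ioc 0 1 ∪ Ioc 1 T) ∪ Ioi T := by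
    intro t ht
    rcases le_or_gt t 1 with h1 | h1
    · exact Or.inl (Or.inl ⟨ht, h1⟩)
    rcases le_or_gt t T with hT' | hT'
    · exact Or.inl (Or.inr ⟨h1, hT'⟩)
    · exact Or.inr hT'
  have hlayer : ∫⁻ t in Ioi 0, μ {x | t < g x} ≤ μ univ + ENNReal.ofReal (A * log T) :=
    calc ∫⁻ t in Ioi 0, μ {x | t < g x}
        ≤ (∫⁻ t in Ioc 0 1, μ {x | t < g x}) + (∫⁻ t in Ioc 1 T, μ {x | t < g x}) +
            ∫⁻ t in Ioi T, μ {x | t < g x} :=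
          (lintegral_mono_set hcover).trans <| (lintegral_union_le _ _ _).trans <|
            add_le_add_left (lintegral_union_le _ _ _) _
      _ ≤ (∫⁻ _ in Ioc (0 : ℝ) 1, μ univ) + (∫⁻ t in Ioc 1 T, ENNReal.ofReal (A / t)) +
            ∫⁻ _ in Ioi T, 0 := by
          gcongr ?_ + ?_ + ?_
          · exact setLIntegral_mono' measurableSet_Ioc fun t _ => measure_mono (subset_univ _)
          · exact setLIntegral_mono' measurableSet_Ioc fun t ht => hlevel t ht.1
          · refine setLIntegral_mono' measurableSet_Ioi fun t ht => ?_
            exact (measure_mono fun x hx => ((hgT x).not_gt (lt_trans ht hx)).elim).trans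
              measure_empty.le
      _ = μ univ + ENNReal.ofReal (A * log T) := by
          simp [setLIntegral_Ioc_ofReal_div hA hT, Real.volume_Ioc]
  rw [integral_eq_lintegral_of_nonneg_ae (ae_of_all _ hg0) hg.aestronglyMeasurable,
    lintegral_eq_lintegral_meas_lt μ (ae_of_all _ hg0) hg]
  calc _ ≤ (μ univ + ENNReal.ofReal (A * log T)).toReal :=
        ENNReal.toReal_mono (by finiteness) hlayer
    _ = μ.real univ + A * log T := by
        rw [ENNReal.toReal_add (measure_ne_top _ _) ENNReal.ofReal_ne_top,
          ENNReal.toReal_ofReal (mul_nonneg hA (log_nonneg hT))]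
        rfl

section Sphere

variable {F : Type*} [NormedAddCommGroup F] [InnerProductSpace ℝ F] [FiniteDimensional ℝ F]

theorem exists_orthonormalBasis_apply_zero_eq {m : ℕ} (hF : Module.finrank ℝ F = m + 1) {p : F}
    (hp : ‖p‖ = 1) : ∃ b : OrthonormalBasis (Fin (m + 1)) ℝ F, b 0 = p := by
  have hunit : Orthonormal ℝ (({0} : Set (Fin (m + 1))).domRestrict fun _ => p) :=
    orthonormal_iff_ite.2 fun i j => by
      rw [if_pos (Subsingleton.elim i j)]
      change ⟪p, p⟫_ℝ = 1
      rw [real_inner_self_eq_norm_sq, hp, one_pow]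
  obtain ⟨b, hb⟩ := hunit.exists_orthonormalBasis_extension_of_card_eq (by simpa using hF)
  exact ⟨b, hb 0 rfl⟩

variable [MeasurableSpace F] [BorelSpace F]

theorem OrthonormalBasis.volume_setOf_forall_abs_inner_le {ι : Type*} [Fintype ι]
    (b : OrthonormalBasis ι ℝ F) (a : ι → ℝ) :
    volume {x | ∀ i, |⟪b i, x⟫_ℝ| ≤ a i} = ∏ i, ENNReal.ofReal (2 * a i) := by
  have hbox : {x | ∀ i, |⟪b i, x⟫_ℝ| ≤ a i} =
      (WithLp.ofLp ∘ b.repr) ⁻¹' univ.pi fun i => Icc (-a i) (a i) := by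
    ext x
    simp only [mem_ofPred_eq, mem_preimage, Function.comp_apply, mem_univ_pi, mem_Icc, abs_le,
      b.repr_apply_apply]
  rw [hbox, ((PiLp.volume_preserving_ofLp ι).comp b.measurePreserving_repr).measure_preimage
    (MeasurableSet.univ_pi fun _ => measurableSet_Icc).nullMeasurableSet, volume_pi_pi]
  simp only [Real.volume_Icc, sub_neg_eq_add, two_mul]

theorem toSphere_setOf_norm_sub_le_of_norm_eq_one {m : ℕ} (hF : Module.finrank ℝ F = m + 1)
    {p : F} (hp : ‖p‖ = 1) {r : ℝ} (hr : 0 ≤ r) :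
    (volume : Measure F).toSphere {ω | ‖p - ω‖ ≤ r} ≤
      ENNReal.ofReal ((m + 1) * (2 * (2 * r) ^ m)) := by
  obtain ⟨b, hb⟩ := exists_orthonormalBasis_apply_zero_eq hF hp
  have hcap : MeasurableSet {ω : sphere (0 : F) 1 | ‖p - ω‖ ≤ r} :=
    (isClosed_le (by fun_prop) continuous_const).measurableSet
  set a : Fin (m + 1) → ℝ := Fin.cons 1 fun _ => r with ha
  -- in the basis `b`, the cone over the cap lies in the box `[-1, 1] × [-r, r] ^ m`
  have hcone : Ioo (0 : ℝ) 1 • (Subtype.val '' {ω : sphere (0 : F) 1 | ‖p - ω‖ ≤ r}) ⊆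
      {x | ∀ i, |⟪b i, x⟫_ℝ| ≤ a i} := by
    rintro _ ⟨c, hc, _, ⟨ω, hω, rfl⟩, rfl⟩ i
    have hω1 : ‖(ω : F)‖ = 1 := by simp
    suffices |⟪b i, (ω : F)⟫_ℝ| ≤ a i by
      rw [inner_smul_right, abs_mul, abs_of_pos hc.1]
      exact (mul_le_of_le_one_left (abs_nonneg _) hc.2.le).trans this
    refine Fin.cases ?_ (fun j => ?_) i
    · simpa [ha, hb, hp, hω1] using abs_real_inner_le_norm p (ω : F)
    · have hperp : ⟪b j.succ, p⟫_ℝ = 0 := hb ▸ b.orthonormal.2 (Fin.succ_ne_zero j)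
      calc |⟪b j.succ, (ω : F)⟫_ℝ| = |⟪b j.succ, (ω : F) - p⟫_ℝ| := by
            rw [inner_sub_right, hperp, sub_zero]
        _ ≤ ‖b j.succ‖ * ‖(ω : F) - p‖ := abs_real_inner_le_norm _ _
        _ ≤ a j.succ := by rw [ha, Fin.cons_succ, b.orthonormal.1, one_mul, norm_sub_rev]; exact hω
  calc (volume : Measure F).toSphere {ω | ‖p - ω‖ ≤ r}
      ≤ (m + 1 : ℕ) * volume {x : F | ∀ i, |⟪b i, x⟫_ℝ| ≤ a i} := by
        rw [Measure.toSphere_apply' _ hcap, hF]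
        gcongr
    _ = ENNReal.ofReal ((m + 1) * (2 * (2 * r) ^ m)) := by
        rw [b.volume_setOf_forall_abs_inner_le, Fin.prod_univ_succ]
        simp only [ha, Fin.cons_zero, Fin.cons_succ, Finset.prod_const, Finset.card_univ,
          Fintype.card_fin]
        conv_rhs => rw [ENNReal.ofReal_mul (by positivity), ENNReal.ofReal_mul zero_le_two,
          ENNReal.ofReal_pow (by positivity), ENNReal.ofReal_mul zero_le_two]
        norm_cast
        simp

theorem toSphere_setOf_norm_sub_le {m : ℕ} (hF : Module.finrank ℝ F = m + 1) (x : F)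
    {r : ℝ} (hr : 0 ≤ r) :
    (volume : Measure F).toSphere {ω | ‖x - ω‖ ≤ r} ≤
      ENNReal.ofReal ((m + 1) * (2 * (4 * r) ^ m)) := by
  rcases eq_empty_or_nonempty {ω : sphere (0 : F) 1 | ‖x - ω‖ ≤ r} with hempty | ⟨ω₀, hω₀⟩
  · simp [hempty]
  have hsub : {ω : sphere (0 : F) 1 | ‖x - ω‖ ≤ r} ⊆ {ω | ‖(ω₀ : F) - ω‖ ≤ 2 * r} := fun ω hω =>
    calc ‖(ω₀ : F) - ω‖ ≤ ‖(ω₀ : F) - x‖ + ‖x - ω‖ := norm_sub_le_norm_sub_add_norm_sub ..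
      _ ≤ 2 * r := by rw [norm_sub_rev]; linarith [hω₀.out, hω.out]
  calc _ ≤ _ := measure_mono hsub
    _ ≤ _ := toSphere_setOf_norm_sub_le_of_norm_eq_one hF (by simp) (by positivity)
    _ = _ := by ring_nf

theorem toSphere_setOf_lt_rpow_le {m : ℕ} (hF : Module.finrank ℝ F = m + 1) (hm : 0 < m) (x : F)
    (b : ℝ) {t : ℝ} (ht : 0 < t) :
    (volume : Measure F).toSphere {ω | t < (‖x - ω‖ ^ 2 + b ^ 2) ^ (-(m : ℝ) / 2)} ≤
      ENNReal.ofReal ((m + 1) * (2 * 4 ^ m) / t) := by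
  have hm' : (0 : ℝ) < m := Nat.cast_pos.2 hm
  have hsub : {ω : sphere (0 : F) 1 | t < (‖x - ω‖ ^ 2 + b ^ 2) ^ (-(m : ℝ) / 2)} ⊆
      {ω | ‖x - ω‖ ≤ t ^ (-1 / (m : ℝ))} := fun ω hω => by
    simpa using (abs_lt_rpow_of_lt_rpow_sq_add_sq hm' ht hω).le
  have hpow : (t ^ (-1 / (m : ℝ))) ^ m = t⁻¹ := by
    rw [← rpow_natCast, ← rpow_mul ht.le, div_mul_cancel₀ _ hm'.ne', rpow_neg_one]
  calc _ ≤ _ := measure_mono hsub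
    _ ≤ _ := toSphere_setOf_norm_sub_le hF x (by positivity)
    _ = _ := by rw [mul_pow, hpow]; ring_nf

end Sphere

/-- For `d ≥ 2` there is `C > 0` such that for all `λ ∈ (0,1)` and all `ℓ ∈ ℝ^d`,
`∫_{S^(d-1)} (|ℓ-ω|² + λ²)^(-(d-1)/2) dσ(ω) ≤ C(1 + log(1/λ))`, where `σ` is the
surface measure on the unit sphere. -/
theorem sphere_integral_log_bound
    (d : ℕ) (hd : 2 ≤ d) :
    ∃ C : ℝ, 0 < C ∧
      ∀ lam : ℝ, lam ∈ Set.Ioo (0 : ℝ) 1 →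
        ∀ l : EuclideanSpace ℝ (Fin d),
          (∫ ω : Metric.sphere (0 : EuclideanSpace ℝ (Fin d)) 1,
              (‖l - (ω : EuclideanSpace ℝ (Fin d))‖ ^ 2 + lam ^ 2) ^ (-((d : ℝ) - 1) / 2)
            ∂((volume : Measure (EuclideanSpace ℝ (Fin d))).toSphere))
          ≤ C * (1 + Real.log (1 / lam)) := by
  obtain ⟨m, rfl⟩ : ∃ m, d = m + 1 := ⟨d - 1, by omega⟩
  have hm : 0 < m := by omega
  have hF : Module.finrank ℝ (EuclideanSpace ℝ (Fin (m + 1))) = m + 1 := finrank_euclideanSpace_fin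
  set σ := (volume : Measure (EuclideanSpace ℝ (Fin (m + 1)))).toSphere
  set A : ℝ := (m + 1) * (2 * 4 ^ m)
  refine ⟨σ.real univ + A * m + 1, by positivity, fun lam hlam l => ?_⟩
  have hexp : -(((m + 1 : ℕ) : ℝ) - 1) / 2 = -(m : ℝ) / 2 := by push_cast; ring
  have hT : 1 ≤ lam ^ (-(m : ℝ)) :=
    one_le_rpow_of_pos_of_le_one_of_nonpos hlam.1 hlam.2.le (by simp)
  have hlog : log (lam ^ (-(m : ℝ))) = m * log (1 / lam) := by
    rw [log_rpow hlam.1, one_div, log_inv]; ring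
  have hL : 0 ≤ log (1 / lam) := log_nonneg (one_le_one_div hlam.1 hlam.2.le)
  have hbound := integral_le_measureReal_univ_add_mul_log (μ := σ) (by fun_prop)
    (fun ω => by positivity) (by positivity) hT
    (fun ω => rpow_sq_add_sq_le_rpow (Nat.cast_nonneg m) hlam.1)
    (fun t ht => toSphere_setOf_lt_rpow_le hF hm l lam (zero_lt_one.trans ht))
  rw [hexp]
  rw [hlog] at hbound
  have hAm : 0 ≤ A * m := by positivity
  calc _ ≤ σ.real univ + A * (m * log (1 / lam)) := hbound
    _ ≤ (σ.real univ + A * m + 1) * (1 + log (1 / lam)) := by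
      nlinarith [mul_nonneg (measureReal_nonneg (μ := σ) (s := univ)) hL]
end

section
/- Let d ≥ 1 and 0 < s < 2 with s < d. Then there exists a constant C > 0 such that for all β > 0 and k_* > 0: ∫_0^∞ β r^{s−1} / (4 + (β²/4)(r² − k_*²)²) dr ≤ C (1 + β k_*²) / (β k_*^{4−s}). -/
/-!
The substitution `r = k t` shows that the integral equals `k^(s-2)` times the same integral
with `k = 1` and `β` replaced by `a = β k²`, so it suffices to bound the latter by
`C (1 + a) / a`. Away from the resonance `t = 1` the denominator is at least `a² t⁴ / 8`
(for `t ≥ 2`) or `a² / 8` (for `t ≤ 1/2`), giving integrable power majorants of total mass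
`O(1/a)` since `0 < s < 4`. On `[1/2, 2]` we have `t^(s-1) ≤ 2` (as `|s - 1| ≤ 1`) and
`(t² - 1)² ≥ (t - 1)²`, so the integrand is dominated by a Lorentzian of width `~ 1/a` and
height `~ a`, whose integral is `2π`.
-/

open Real MeasureTheory Set

theorem integrable_inv_sq_add_sq_mul_sub_sq {b c : ℝ} (hb : 0 < b) (hc : 0 < c) (k : ℝ) :
    Integrable fun x : ℝ => (b ^ 2 + c ^ 2 * (x - k) ^ 2)⁻¹ := by
  have h := ((integrable_inv_one_add_sq.comp_mul_left' (R := c / b) (by positivity)).comp_sub_right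
    k).const_mul (b ^ 2)⁻¹
  refine h.congr (ae_of_all _ fun x => ?_)
  field_simp

theorem integral_inv_sq_add_sq_mul_sub_sq {b c : ℝ} (hb : 0 < b) (hc : 0 < c) (k : ℝ) :
    ∫ x : ℝ, (b ^ 2 + c ^ 2 * (x - k) ^ 2)⁻¹ = π / (b * c) := by
  have hrw : (fun x : ℝ => (b ^ 2 + c ^ 2 * (x - k) ^ 2)⁻¹)
      = fun x => (b ^ 2)⁻¹ * (1 + (c / b * (x - k)) ^ 2)⁻¹ := by
    funext x
    field_simp
  rw [hrw, integral_const_mul, integral_sub_right_eq_self (fun x => (1 + (c / b * x) ^ 2)⁻¹) k,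
    Measure.integral_comp_mul_left (fun y => (1 + y ^ 2)⁻¹), integral_univ_inv_one_add_sq,
    abs_of_pos (by positivity), smul_eq_mul]
  field_simp

theorem integrableOn_Ioc_zero_one_rpow {e : ℝ} (he : -1 < e) :
    IntegrableOn (fun r : ℝ => r ^ e) (Ioc 0 1) :=
  (intervalIntegrable_iff_integrableOn_Ioc_of_le zero_le_one).1
    (intervalIntegral.intervalIntegrable_rpow' he)

theorem integral_Ioc_zero_one_rpow {e : ℝ} (he : -1 < e) :
    ∫ r in Ioc (0 : ℝ) 1, r ^ e = 1 / (e + 1) := by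
  rw [← intervalIntegral.integral_of_le zero_le_one, integral_rpow (Or.inl he), one_rpow,
    zero_rpow (by linarith)]
  ring

theorem integral_Ioi_one_rpow {e : ℝ} (he : e < -1) :
    ∫ r in Ioi (1 : ℝ), r ^ e = -1 / (e + 1) := by
  rw [integral_Ioi_rpow_of_lt he zero_lt_one, one_rpow]

theorem indicator_rpow_nonneg {S : Set ℝ} (hS : ∀ x ∈ S, 0 ≤ x) (e r : ℝ) :
    0 ≤ S.indicator (fun x => x ^ e) r :=
  indicator_nonneg (fun x hx => rpow_nonneg (hS x hx) e) r

theorem rpow_le_two_of_mem_Icc {r e : ℝ} (hr : r ∈ Icc (1 / 2 : ℝ) 2) (he : |e| ≤ 1) :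
    r ^ e ≤ 2 := by
  obtain ⟨hr1, hr2⟩ := hr
  rcases le_total 0 e with he0 | he0
  · calc r ^ e ≤ 2 ^ e := rpow_le_rpow (by linarith) hr2 he0
      _ ≤ 2 ^ (1 : ℝ) := rpow_le_rpow_of_exponent_le one_le_two (by linarith [le_abs_self e])
      _ = 2 := rpow_one 2
  · calc r ^ e ≤ (1 / 2) ^ e := rpow_le_rpow_of_nonpos (by norm_num) hr1 he0
      _ = 2 ^ (-e) := by rw [one_div, inv_rpow zero_le_two, rpow_neg zero_le_two]
      _ ≤ 2 ^ (1 : ℝ) := rpow_le_rpow_of_exponent_le one_le_two (by linarith [neg_abs_le e])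
      _ = 2 := rpow_one 2

noncomputable def radialKernel (s β k r : ℝ) : ℝ :=
  β * r ^ (s - 1) / (4 + β ^ 2 / 4 * (r ^ 2 - k ^ 2) ^ 2)

noncomputable def radialIntegral (s β k : ℝ) : ℝ :=
  ∫ r in Ioi (0 : ℝ), radialKernel s β k r

theorem radialIntegral_eq_rpow_mul (s β : ℝ) {k : ℝ} (hk : 0 < k) :
    radialIntegral s β k = k ^ (s - 2) * radialIntegral s (β * k ^ 2) 1 := by
  have hkernel : ∀ t ∈ Ioi (0 : ℝ),
      radialKernel s β k (k * t) = k ^ (s - 3) * radialKernel s (β * k ^ 2) 1 t := by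
    intro t ht
    have hpow : (k * t) ^ (s - 1) = k ^ (s - 3) * k ^ 2 * t ^ (s - 1) := by
      rw [mul_rpow hk.le (le_of_lt ht), ← rpow_natCast k 2, ← rpow_add hk]
      congr 2
      push_cast
      ring
    unfold radialKernel
    rw [hpow]
    field_simp
  have hsubst := integral_comp_mul_left_Ioi (radialKernel s β k) 0 hk
  rw [mul_zero, setIntegral_congr_fun measurableSet_Ioi hkernel, integral_const_mul,
    smul_eq_mul, eq_inv_mul_iff_mul_eq₀ hk.ne'] at hsubst
  have hk2 : k ^ (s - 2) = k * k ^ (s - 3) := by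
    rw [mul_comm, ← rpow_add_one hk.ne']; ring_nf
  unfold radialIntegral
  rw [← hsubst, hk2, mul_assoc]

section Bounds

variable {s a r : ℝ}

theorem radialKernel_nonneg (ha : 0 ≤ a) (hr : 0 ≤ r) (k : ℝ) :
    0 ≤ radialKernel s a k r := by
  unfold radialKernel
  have := rpow_nonneg hr (s - 1)
  positivity

theorem radialKernel_le_of_le_half (ha : 0 < a) (hr : 0 < r) (hr' : r ≤ 1 / 2) :
    radialKernel s a 1 r ≤ 8 / a * r ^ (s - 1) := by
  have hden : a ^ 2 / 8 ≤ 4 + a ^ 2 / 4 * (r ^ 2 - 1 ^ 2) ^ 2 := by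
    have : 1 / 2 ≤ (r ^ 2 - 1) ^ 2 := by nlinarith
    nlinarith [sq_nonneg a]
  calc radialKernel s a 1 r ≤ a * r ^ (s - 1) / (a ^ 2 / 8) :=
        div_le_div_of_nonneg_left (by positivity) (by positivity) hden
    _ = 8 / a * r ^ (s - 1) := by field_simp

theorem radialKernel_le_of_two_le (ha : 0 < a) (hr : 2 ≤ r) :
    radialKernel s a 1 r ≤ 8 / a * r ^ (s - 5) := by
  have hr0 : 0 < r := by linarith
  have hden : a ^ 2 * r ^ 4 / 8 ≤ 4 + a ^ 2 / 4 * (r ^ 2 - 1 ^ 2) ^ 2 := by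
    have : r ^ 4 / 2 ≤ (r ^ 2 - 1) ^ 2 := by
      nlinarith [mul_le_mul_of_nonneg_left (show 4 ≤ r ^ 2 by nlinarith) (sq_nonneg r)]
    nlinarith [sq_nonneg a]
  have hsplit : r ^ (s - 1) = r ^ (s - 5) * r ^ 4 := by
    rw [← rpow_natCast r 4, ← rpow_add hr0]; congr 1; ring
  calc radialKernel s a 1 r ≤ a * r ^ (s - 1) / (a ^ 2 * r ^ 4 / 8) :=
        div_le_div_of_nonneg_left (by positivity) (by positivity) hden
    _ = 8 / a * r ^ (s - 5) := by rw [hsplit]; field_simp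

theorem radialKernel_le_of_mem_Icc (hs0 : 0 ≤ s) (hs2 : s ≤ 2) (ha : 0 < a)
    (hr : r ∈ Icc (1 / 2 : ℝ) 2) :
    radialKernel s a 1 r ≤ 2 * a * (2 ^ 2 + (a / 2) ^ 2 * (r - 1) ^ 2)⁻¹ := by
  have hnum : r ^ (s - 1) ≤ 2 :=
    rpow_le_two_of_mem_Icc hr (abs_le.2 ⟨by linarith, by linarith⟩)
  have hden : 2 ^ 2 + (a / 2) ^ 2 * (r - 1) ^ 2 ≤ 4 + a ^ 2 / 4 * (r ^ 2 - 1 ^ 2) ^ 2 := by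
    have : (r - 1) ^ 2 ≤ (r ^ 2 - 1) ^ 2 := by nlinarith [sq_nonneg (r - 1), hr.1]
    nlinarith [sq_nonneg a]
  rw [← div_eq_mul_inv]
  exact div_le_div₀ (by positivity) (by nlinarith) (by positivity) hden

end Bounds

noncomputable def radialMajorant (s a r : ℝ) : ℝ :=
  8 / a * ((Ioc 0 1).indicator (fun r => r ^ (s - 1)) r
      + (Ioi 1).indicator (fun r => r ^ (s - 5)) r)
    + 2 * a * (2 ^ 2 + (a / 2) ^ 2 * (r - 1) ^ 2)⁻¹

section Majorant
variable {s a : ℝ}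

theorem radialMajorant_nonneg (ha : 0 < a) (r : ℝ) : 0 ≤ radialMajorant s a r := by
  have h₁ := indicator_rpow_nonneg (S := Ioc 0 1) (fun _ hx => hx.1.le) (s - 1) r
  have h₂ :=
    indicator_rpow_nonneg (S := Ioi 1) (fun _ hx => zero_le_one.trans (le_of_lt hx)) (s - 5) r
  unfold radialMajorant
  positivity

theorem radialKernel_le_radialMajorant (hs0 : 0 ≤ s) (hs2 : s ≤ 2) (ha : 0 < a) {r : ℝ}
    (hr : 0 < r) : radialKernel s a 1 r ≤ radialMajorant s a r := by
  have h₁ := indicator_rpow_nonneg (S := Ioc 0 1) (fun _ hx => hx.1.le) (s - 1) r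
  have h₂ :=
    indicator_rpow_nonneg (S := Ioi 1) (fun _ hx => zero_le_one.trans (le_of_lt hx)) (s - 5) r
  have hL : 0 ≤ 2 * a * (2 ^ 2 + (a / 2) ^ 2 * (r - 1) ^ 2)⁻¹ := by positivity
  have h₈ : 0 ≤ 8 / a := by positivity
  unfold radialMajorant
  rcases lt_or_ge r (1 / 2) with hsmall | hr₁
  · rw [indicator_of_mem (show r ∈ Ioc 0 1 from ⟨hr, by linarith⟩)]
    linarith [radialKernel_le_of_le_half (s := s) ha hr hsmall.le, mul_nonneg h₈ h₂]
  rcases le_or_gt r 2 with hr₂ | hlarge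
  · linarith [radialKernel_le_of_mem_Icc hs0 hs2 ha ⟨hr₁, hr₂⟩,
      mul_nonneg h₈ (add_nonneg h₁ h₂)]
  · rw [indicator_of_mem (show r ∈ Ioi 1 from mem_Ioi.2 (by linarith))]
    linarith [radialKernel_le_of_two_le (s := s) ha hlarge.le, mul_nonneg h₈ h₁]

theorem integrable_radialMajorant (hs0 : 0 < s) (hs4 : s < 4) (ha : 0 < a) :
    Integrable (radialMajorant s a) :=
  ((((integrableOn_Ioc_zero_one_rpow (by linarith)).integrable_indicator measurableSet_Ioc).add
    ((integrableOn_Ioi_rpow_of_lt (by linarith) zero_lt_one).integrable_indicator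
      measurableSet_Ioi)).const_mul _).add
    ((integrable_inv_sq_add_sq_mul_sub_sq two_pos (by positivity) 1).const_mul _)

theorem integral_radialMajorant (hs0 : 0 < s) (hs4 : s < 4) (ha : 0 < a) :
    ∫ r, radialMajorant s a r = (8 / s + 8 / (4 - s)) / a + 2 * π := by
  have h₁ := (integrableOn_Ioc_zero_one_rpow (e := s - 1) (by linarith)).integrable_indicator
    measurableSet_Ioc
  have h₂ := (integrableOn_Ioi_rpow_of_lt (a := s - 5) (by linarith)
    zero_lt_one).integrable_indicator measurableSet_Ioi
  have hL := integrable_inv_sq_add_sq_mul_sub_sq two_pos (show 0 < a / 2 by positivity) 1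
  unfold radialMajorant
  rw [integral_add ((h₁.fun_add h₂).const_mul _) (hL.const_mul _), integral_const_mul,
    integral_const_mul, integral_add h₁ h₂, integral_indicator measurableSet_Ioc,
    integral_indicator measurableSet_Ioi, integral_Ioc_zero_one_rpow (by linarith),
    integral_Ioi_one_rpow (by linarith), integral_inv_sq_add_sq_mul_sub_sq two_pos (by positivity),
    sub_add_cancel, show s - 5 + 1 = -(4 - s) by ring, neg_div_neg_eq]
  field_simp

end Majorant

theorem radialIntegral_one_le {s a : ℝ} (hs0 : 0 < s) (hs2 : s < 2) (ha : 0 < a) :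
    radialIntegral s a 1 ≤ (8 / s + 8 / (4 - s)) / a + 2 * π := by
  have hint := integrable_radialMajorant hs0 (by linarith) ha
  calc radialIntegral s a 1 ≤ ∫ r in Ioi 0, radialMajorant s a r :=
        integral_mono_of_nonneg
          ((ae_restrict_iff' measurableSet_Ioi).2 (ae_of_all _ fun r hr =>
            radialKernel_nonneg ha.le (le_of_lt hr) 1))
          hint.integrableOn
          ((ae_restrict_iff' measurableSet_Ioi).2 (ae_of_all _ fun r hr =>
            radialKernel_le_radialMajorant hs0.le hs2.le ha hr))
    _ ≤ ∫ r, radialMajorant s a r :=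
        setIntegral_le_integral hint (ae_of_all _ (radialMajorant_nonneg ha))
    _ = (8 / s + 8 / (4 - s)) / a + 2 * π := integral_radialMajorant hs0 (by linarith) ha

theorem radial_integral_bound_general
    (s : ℝ) (hs0 : 0 < s) (hs2 : s < 2) :
    ∃ C : ℝ, 0 < C ∧
      ∀ β kstar : ℝ, 0 < β → 0 < kstar →
        (∫ r in Set.Ioi (0 : ℝ),
            β * r ^ (s - 1) / (4 + β ^ 2 / 4 * (r ^ 2 - kstar ^ 2) ^ 2))
          ≤ C * (1 + β * kstar ^ 2) / (β * kstar ^ (4 - s)) := by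
  have h4s : 0 < 4 - s := by linarith
  have hA : 0 < 8 / s + 8 / (4 - s) := by positivity
  refine ⟨8 / s + 8 / (4 - s) + 2 * π, by positivity, fun β k hβ hk => ?_⟩
  have ha : 0 < β * k ^ 2 := by positivity
  have hk4 : k ^ (4 - s) = k ^ 2 * k ^ (2 - s) := by
    rw [← rpow_natCast, ← rpow_add hk]; congr 1; push_cast; ring
  calc radialIntegral s β k = k ^ (s - 2) * radialIntegral s (β * k ^ 2) 1 :=
        radialIntegral_eq_rpow_mul s β hk
    _ ≤ k ^ (s - 2) * ((8 / s + 8 / (4 - s)) / (β * k ^ 2) + 2 * π) :=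
        mul_le_mul_of_nonneg_left (radialIntegral_one_le hs0 hs2 ha) (by positivity)
    _ ≤ (8 / s + 8 / (4 - s) + 2 * π) * (1 + β * k ^ 2) / (β * k ^ (4 - s)) := by
        have hp : 0 < k ^ (2 - s) := rpow_pos_of_pos hk _
        rw [hk4, show s - 2 = -(2 - s) by ring, rpow_neg hk.le]
        generalize 8 / s + 8 / (4 - s) = A at hA ⊢
        field_simp
        nlinarith [pi_pos]

/-- For `0 < s < 2` with `s < d`, there is `C > 0` such that for all `β > 0` and
`k_* > 0`, `∫_0^∞ β r^(s-1)/(4 + (β²/4)(r² - k_*²)²) dr ≤ C(1 + β k_*²)/(β k_*^(4-s))`. -/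
theorem radial_integral_bound
    (d : ℕ) (hd : 1 ≤ d) (s : ℝ) (hs0 : 0 < s) (hs2 : s < 2) (hsd : s < d) :
    ∃ C : ℝ, 0 < C ∧
      ∀ β kstar : ℝ, 0 < β → 0 < kstar →
        (∫ r in Set.Ioi (0 : ℝ),
            β * r ^ (s - 1) / (4 + β ^ 2 / 4 * (r ^ 2 - kstar ^ 2) ^ 2))
          ≤ C * (1 + β * kstar ^ 2) / (β * kstar ^ (4 - s)) :=
  radial_integral_bound_general s hs0 hs2
end
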